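/- arXiv:2205.09734 — 10 statements merged into one kernel-verified Lean document; each statement's English description precedes it below -/
import Mathlib

section
/- Stability of equidistribution under convolution: Let ν be a probability measure on U(d) that is (α,β)-equidistributed at scale ε, and let ϑ be an arbitrary probability measure on U(d). Then the convolution ν∗ϑ (the pushforward of the product measure ν×ϑ under the multiplication map (U,V) ↦ U·V) is also (α,β)-equidistributed at scale ε. -/
open MeasureTheory
open scoped ENNReal Matrix InnerProductSpace

namespace Paper

noncomputable section

instance matMS (d : ℕ) : MeasurableSpace (Matrix (Fin d) (Fin d) ℂ) := borel _
instance matBS (d : ℕ) : BorelSpace (Matrix (Fin d) (Fin d) ℂ) := ⟨rfl⟩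

/-- The unitary group `U(d)`. -/
abbrev UG (d : ℕ) := Matrix.unitaryGroup (Fin d) ℂ

/-- ℓ²→ℓ² operator norm (spectral norm) of a matrix. -/
def opNorm {d : ℕ} (A : Matrix (Fin d) (Fin d) ℂ) : ℝ :=
  ‖Matrix.toEuclideanCLM (𝕜 := ℂ) A‖

/-- Phase-invariant distance on unitary channels. -/
def D {d : ℕ} (U V : UG d) : ℝ :=
  ⨅ z : {z : ℂ // ‖z‖ = 1},
    opNorm ((U : Matrix (Fin d) (Fin d) ℂ) - z.val • (V : Matrix (Fin d) (Fin d) ℂ))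

/-- Closed ball of radius `r` around `V` in `U(d)` for the distance `D`. -/
def ball {d : ℕ} (V : UG d) (r : ℝ) : Set (UG d) := {U | D U V ≤ r}

/-- Haar volume of a ball of radius `r`. -/
def Vol {d : ℕ} (μ : Measure (UG d)) (r : ℝ) : ℝ≥0∞ := μ (ball 1 r)

/-- `(α,β)`-equidistribution of `ν` at scale `ε` (relative to the Haar measure `μ`). -/
def Equidistributed {d : ℕ} (μ ν : Measure (UG d)) (α β ε : ℝ) : Prop :=
  ∀ (V : UG d) (r : ℝ), ε ≤ r →
    Vol μ (α * r) ≤ ν (ball V r) ∧ ν (ball V r) ≤ Vol μ (β * r)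

/-- Products of at most `r` elements of the gate set `𝒢`. -/
def wordsLe {d : ℕ} (𝒢 : Finset (UG d)) (r : ℕ) : Set (UG d) :=
  {W | ∃ l : List (UG d), l.length ≤ r ∧ (∀ g ∈ l, g ∈ 𝒢) ∧ l.prod = W}

/-- Convolution of two measures on a monoid: pushforward of the product measure under
multiplication. -/
def mconv {G : Type*} [Monoid G] [MeasurableSpace G] (ν ϑ : Measure G) : Measure G :=
  (ν.prod ϑ).map (fun p => p.1 * p.2)

/-- `t`-fold convolution power of a measure. -/
def convPow {G : Type*} [Monoid G] [MeasurableSpace G] (ν : Measure G) : ℕ → Measure G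
  | 0 => Measure.dirac 1
  | n + 1 => mconv (convPow ν n) ν

/-- The random walk `U_t = V_t ⋯ V_1`. -/
def walk {d : ℕ} {Ω : Type*} (V : ℕ → Ω → UG d) (t : ℕ) (ω : Ω) : UG d :=
  ((List.range t).map (fun i => V (t - i) ω)).prod

/-- Euclidean space `ℂ^d`. -/
abbrev EV (d : ℕ) := EuclideanSpace ℂ (Fin d)

instance evMS (d : ℕ) : MeasurableSpace (EV d) := borel _
instance evBS (d : ℕ) : BorelSpace (EV d) := ⟨rfl⟩

/-- Distance on pure states. -/
def dS {d : ℕ} (ψ φ : EV d) : ℝ := Real.sqrt (1 - ‖⟪ψ, φ⟫_ℂ‖ ^ 2)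

/-- Ball of radius `r` around the state `φ`, inside the set of unit vectors. -/
def ballS {d : ℕ} (φ : EV d) (r : ℝ) : Set (EV d) := {ψ | ‖ψ‖ = 1 ∧ dS ψ φ ≤ r}

/-- Action of a unitary matrix on a vector. -/
def act {d : ℕ} (U : UG d) (ψ : EV d) : EV d :=
  Matrix.toEuclideanLin (U : Matrix (Fin d) (Fin d) ℂ) ψ

/-- Topological support of a measure. -/
def msupport {X : Type*} [TopologicalSpace X] [MeasurableSpace X] (ν : Measure X) : Set X :=
  {x | ∀ U : Set X, IsOpen U → x ∈ U → ν U ≠ 0}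

/-- Packing number (as an extended nonnegative real): supremum of cardinalities of finite
subsets of `Y` whose elements are pairwise at `dist`-distance at least `ε`. -/
def Npack {X : Type*} (dist : X → X → ℝ) (Y : Set X) (ε : ℝ) : ℝ≥0∞ :=
  ⨆ (S : Finset X) (_ : ↑S ⊆ Y ∧ (S : Set X).Pairwise fun x y => ε ≤ dist x y),
    (S.card : ℝ≥0∞)

end
end Paper

namespace Paper
open ProbabilityTheory

set_option maxHeartbeats 2000000

instance matSC (d : ℕ) : SecondCountableTopology (Matrix (Fin d) (Fin d) ℂ) :=
  inferInstanceAs (SecondCountableTopology (∀ _ : Fin d, ∀ _ : Fin d, ℂ))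

instance ugBS (d : ℕ) : BorelSpace (UG d) := Subtype.borelSpace _

instance ugSC (d : ℕ) : SecondCountableTopology (UG d) :=
  Topology.IsEmbedding.subtypeVal.secondCountableTopology

lemma opNorm_add_le {d : ℕ} (A B : Matrix (Fin d) (Fin d) ℂ) :
    opNorm (A + B) ≤ opNorm A + opNorm B := by
  unfold opNorm; rw [map_add]; exact norm_add_le _ _

lemma opNorm_mul_unitary {d : ℕ} (A : Matrix (Fin d) (Fin d) ℂ) (W : UG d) :
    opNorm (A * (W : Matrix (Fin d) (Fin d) ℂ)) = opNorm A := by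
  unfold opNorm
  rw [map_mul]
  refine CStarRing.norm_mul_mem_unitary _ ?_
  have hW := W.2
  constructor
  · rw [← map_star, ← map_mul, hW.1, map_one]
  · rw [← map_star, ← map_mul, hW.2, map_one]

lemma D_mul_right {d : ℕ} (U V W : UG d) : D (U * W) V = D U (V * W⁻¹) := by
  unfold D
  refine iInf_congr fun z => ?_
  have h : ((U : Matrix (Fin d) (Fin d) ℂ) - z.val • ((V * W⁻¹ : UG d) : Matrix (Fin d) (Fin d) ℂ))
      * (W : Matrix (Fin d) (Fin d) ℂ)
      = ((U * W : UG d) : Matrix (Fin d) (Fin d) ℂ) - z.val • (V : Matrix (Fin d) (Fin d) ℂ) := by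
    have h2 : ((V * W⁻¹ : UG d) : Matrix (Fin d) (Fin d) ℂ) * (W : Matrix (Fin d) (Fin d) ℂ)
        = (V : Matrix (Fin d) (Fin d) ℂ) := by
      rw [← Submonoid.coe_mul]
      norm_cast
      rw [inv_mul_cancel_right]
    rw [sub_mul, smul_mul_assoc, h2, Submonoid.coe_mul]
  rw [← h, opNorm_mul_unitary]

lemma continuous_opNorm (d : ℕ) : Continuous (fun A : Matrix (Fin d) (Fin d) ℂ => opNorm A) := by
  let L : Matrix (Fin d) (Fin d) ℂ →ₗ[ℂ] (EV d →L[ℂ] EV d) :=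
    { toFun := fun A => Matrix.toEuclideanCLM (𝕜 := ℂ) A
      map_add' := fun A B => map_add _ A B
      map_smul' := fun c A => map_smul _ c A }
  have h2 : Continuous fun A => ‖L A‖ := L.continuous_of_finiteDimensional.norm
  have he : ∀ A : Matrix (Fin d) (Fin d) ℂ, opNorm A = ‖L A‖ := fun A => rfl
  simp only [he]
  exact h2

lemma continuous_D {d : ℕ} (V : UG d) : Continuous (fun U : UG d => D U V) := by
  have hz : Nonempty {z : ℂ // ‖z‖ = 1} := ⟨⟨1, by simp⟩⟩
  have hbdd : ∀ (U : UG d), BddBelow (Set.range fun z : {z : ℂ // ‖z‖ = 1} =>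
      opNorm ((U : Matrix (Fin d) (Fin d) ℂ) - z.val • (V : Matrix (Fin d) (Fin d) ℂ))) := by
    intro U
    refine ⟨0, fun x hx => ?_⟩
    obtain ⟨z, rfl⟩ := hx
    exact norm_nonneg _
  have key : ∀ U U' : UG d, D U V ≤ D U' V +
      opNorm ((U : Matrix (Fin d) (Fin d) ℂ) - (U' : Matrix (Fin d) (Fin d) ℂ)) := by
    intro U U'
    rw [← sub_le_iff_le_add]
    refine le_ciInf fun z => ?_
    rw [sub_le_iff_le_add]
    calc D U V ≤ opNorm ((U : Matrix (Fin d) (Fin d) ℂ) - z.val • (V : Matrix (Fin d) (Fin d) ℂ)) :=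
          ciInf_le (hbdd U) z
      _ ≤ _ := by
          have heq : (U : Matrix (Fin d) (Fin d) ℂ) - z.val • (V : Matrix (Fin d) (Fin d) ℂ)
              = ((U' : Matrix (Fin d) (Fin d) ℂ) - z.val • (V : Matrix (Fin d) (Fin d) ℂ))
                + ((U : Matrix (Fin d) (Fin d) ℂ) - (U' : Matrix (Fin d) (Fin d) ℂ)) := by abel
          rw [heq]
          have h3 := opNorm_add_le
            ((U' : Matrix (Fin d) (Fin d) ℂ) - z.val • (V : Matrix (Fin d) (Fin d) ℂ))
            ((U : Matrix (Fin d) (Fin d) ℂ) - (U' : Matrix (Fin d) (Fin d) ℂ))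
          linarith
  rw [continuous_iff_continuousAt]
  intro U₀
  have hg : Continuous (fun U : UG d =>
      opNorm ((U : Matrix (Fin d) (Fin d) ℂ) - (U₀ : Matrix (Fin d) (Fin d) ℂ))) :=
    (continuous_opNorm d).comp (continuous_subtype_val.sub continuous_const)
  have hg0 : Filter.Tendsto (fun U : UG d =>
      opNorm ((U : Matrix (Fin d) (Fin d) ℂ) - (U₀ : Matrix (Fin d) (Fin d) ℂ)))
      (nhds U₀) (nhds 0) := by
    have hzero : opNorm ((U₀ : Matrix (Fin d) (Fin d) ℂ) - (U₀ : Matrix (Fin d) (Fin d) ℂ)) = 0 := by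
      rw [sub_self]
      unfold opNorm
      rw [map_zero, norm_zero]
    simpa only [hzero] using hg.tendsto U₀
  unfold ContinuousAt
  have h1 : Filter.Tendsto (fun U : UG d => D U₀ V -
      opNorm ((U : Matrix (Fin d) (Fin d) ℂ) - (U₀ : Matrix (Fin d) (Fin d) ℂ)))
      (nhds U₀) (nhds (D U₀ V)) := by
    simpa using (tendsto_const_nhds (x := D U₀ V)).sub hg0
  have h2 : Filter.Tendsto (fun U : UG d => D U₀ V +
      opNorm ((U : Matrix (Fin d) (Fin d) ℂ) - (U₀ : Matrix (Fin d) (Fin d) ℂ)))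
      (nhds U₀) (nhds (D U₀ V)) := by
    simpa using (tendsto_const_nhds (x := D U₀ V)).add hg0
  refine tendsto_of_tendsto_of_tendsto_of_le_of_le h1 h2 ?_ ?_
  · intro U
    have := key U₀ U
    have hsymm : opNorm ((U₀ : Matrix (Fin d) (Fin d) ℂ) - (U : Matrix (Fin d) (Fin d) ℂ))
        = opNorm ((U : Matrix (Fin d) (Fin d) ℂ) - (U₀ : Matrix (Fin d) (Fin d) ℂ)) := by
      unfold opNorm
      rw [map_sub, map_sub, ← norm_neg, neg_sub]
    simp only [Set.mem_setOf_eq]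
    linarith [key U₀ U, hsymm]
  · intro U
    exact key U U₀

lemma measurableSet_ball {d : ℕ} (V : UG d) (r : ℝ) : MeasurableSet (ball V r) := by
  have : ball V r = (fun U : UG d => D U V) ⁻¹' Set.Iic r := rfl
  rw [this]
  exact ((isClosed_Iic).preimage (continuous_D V)).measurableSet

lemma preimage_slice {d : ℕ} (V W : UG d) (r : ℝ) :
    ((fun U : UG d => (U, W)) ⁻¹' ((fun p : UG d × UG d => p.1 * p.2) ⁻¹' ball V r))
      = ball (V * W⁻¹) r := by
  ext U
  simp only [Set.mem_preimage, ball, Set.mem_setOf_eq, D_mul_right]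


theorem stmt0 {d : ℕ} (hd : 2 ≤ d) (μ ν ϑ : Measure (UG d))
    [IsProbabilityMeasure μ] [μ.IsMulLeftInvariant]
    [IsProbabilityMeasure ν] [IsProbabilityMeasure ϑ]
    {α β ε : ℝ} (hα0 : 0 < α) (hα1 : α ≤ 1) (hβ : 1 ≤ β) (hε : 0 < ε)
    (hequi : Equidistributed μ ν α β ε) :
    Equidistributed μ (mconv ν ϑ) α β ε := by
  intro V r hr
  have hmul : Measurable (fun p : UG d × UG d => p.1 * p.2) := continuous_mul.measurable
  have hs : MeasurableSet (ball V r) := measurableSet_ball V r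
  have hrep : mconv ν ϑ (ball V r)
      = ∫⁻ W, ν (ball (V * W⁻¹) r) ∂ϑ := by
    rw [mconv, Measure.map_apply hmul hs, Measure.prod_apply_symm (hmul hs)]
    exact lintegral_congr fun W => by rw [preimage_slice]
  constructor
  · calc Vol μ (α * r) = ∫⁻ _, Vol μ (α * r) ∂ϑ := by
          rw [lintegral_const, measure_univ, mul_one]
      _ ≤ ∫⁻ W, ν (ball (V * W⁻¹) r) ∂ϑ :=
          lintegral_mono fun W => (hequi (V * W⁻¹) r hr).1
      _ = mconv ν ϑ (ball V r) := hrep.symm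
  · calc mconv ν ϑ (ball V r) = ∫⁻ W, ν (ball (V * W⁻¹) r) ∂ϑ := hrep
      _ ≤ ∫⁻ _, Vol μ (β * r) ∂ϑ := lintegral_mono fun W => (hequi (V * W⁻¹) r hr).2
      _ = Vol μ (β * r) := by rw [lintegral_const, measure_univ, mul_one]


end Paper
end

section
/- Overlap bound from phase-invariant distance: Let U, V ∈ U(d) and let 0 ≤ ε ≤ √2. If D(U,V) ≤ ε, then |tr(U·Vᴴ)|² ≥ d²·(1−ε²), where Vᴴ denotes the conjugate transpose of V. -/
open MeasureTheory
open scoped ENNReal Matrix InnerProductSpace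

namespace Paper
open ProbabilityTheory

/-! Expanding the Frobenius norm, `‖U - W‖_F² = 2d - 2 Re tr(Wᴴ U)` for unitaries `U`, `W`,
and each of the `d` columns of `U - W` has norm at most `‖U - W‖`. With `W = zV` for a phase `z`
this gives `2d - 2|tr(U Vᴴ)| ≤ d ‖U - zV‖²`, hence `2|tr(U Vᴴ)| ≥ d (2 - D(U,V)²) ≥ d (2 - ε²)`;
squaring concludes, as `(2 - ε²)² ≥ 4 (1 - ε²)`. -/

open Matrix

section UnitaryTrace

variable {𝕜 n : Type*} [RCLike 𝕜] [Fintype n] [DecidableEq n]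

lemma re_conjTranspose_mul_self_apply_le (A : Matrix n n 𝕜) (i : n) :
    RCLike.re ((Aᴴ * A) i i) ≤ ‖toEuclideanCLM (n := n) (𝕜 := 𝕜) A‖ ^ 2 := by
  have hcol : RCLike.re ((Aᴴ * A) i i) =
      ‖toEuclideanCLM (n := n) (𝕜 := 𝕜) A (EuclideanSpace.single i 1)‖ ^ 2 := by
    simp [EuclideanSpace.norm_sq_eq, mul_apply, ← PiLp.toLp_single, mulVec_single,
      RCLike.conj_mul]
  have hle := (toEuclideanCLM (n := n) (𝕜 := 𝕜) A).le_opNorm (EuclideanSpace.single i 1)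
  rw [PiLp.norm_single, norm_one, mul_one] at hle
  rw [hcol]
  gcongr

lemma re_trace_conjTranspose_mul_self_le (A : Matrix n n 𝕜) :
    RCLike.re (trace (Aᴴ * A)) ≤ Fintype.card n * ‖toEuclideanCLM (n := n) (𝕜 := 𝕜) A‖ ^ 2 := by
  simpa [trace] using
    Finset.sum_le_sum fun i (_ : i ∈ Finset.univ) => re_conjTranspose_mul_self_apply_le A i

lemma re_trace_conjTranspose_sub_mul_sub {U W : Matrix n n 𝕜} (hU : Uᴴ * U = 1)
    (hW : Wᴴ * W = 1) :
    RCLike.re (trace ((U - W)ᴴ * (U - W))) =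
      2 * Fintype.card n - 2 * RCLike.re (trace (Wᴴ * U)) := by
  have hconj : trace (Uᴴ * W) = star (trace (Wᴴ * U)) := by
    rw [← trace_conjTranspose, conjTranspose_mul, conjTranspose_conjTranspose]
  simp only [conjTranspose_sub, sub_mul, mul_sub, hU, hW, trace_sub, trace_one, hconj,
    map_sub, RCLike.star_def, RCLike.conj_re, RCLike.natCast_re]
  ring

lemma two_mul_card_sub_two_mul_norm_trace_le {U V : Matrix n n 𝕜} (hU : U ∈ unitaryGroup n 𝕜)
    (hV : V ∈ unitaryGroup n 𝕜) {z : 𝕜} (hz : ‖z‖ = 1) :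
    2 * Fintype.card n - 2 * ‖trace (U * Vᴴ)‖ ≤
      Fintype.card n * ‖toEuclideanCLM (n := n) (𝕜 := 𝕜) (U - z • V)‖ ^ 2 := by
  rw [mem_unitaryGroup_iff', star_eq_conjTranspose] at hU hV
  have hzV : (z • V)ᴴ * (z • V) = 1 := by
    rw [conjTranspose_smul, smul_mul, Matrix.mul_smul, smul_smul, hV, RCLike.star_def,
      RCLike.conj_mul, hz]
    simp
  have hphase : RCLike.re (trace ((z • V)ᴴ * U)) ≤ ‖trace (U * Vᴴ)‖ := calc
    RCLike.re (trace ((z • V)ᴴ * U)) ≤ ‖trace ((z • V)ᴴ * U)‖ := RCLike.re_le_norm _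
    _ = ‖trace (U * Vᴴ)‖ := by
      rw [conjTranspose_smul, smul_mul, trace_smul, norm_smul, norm_star, hz, one_mul,
        trace_mul_comm]
  have := re_trace_conjTranspose_mul_self_le (U - z • V)
  rw [re_trace_conjTranspose_sub_mul_sub hU hzV] at this
  linarith

end UnitaryTrace

lemma le_mul_ciInf_sq {ι : Sort*} [Nonempty ι] {f : ι → ℝ} (hf : ∀ i, 0 ≤ f i) {a c : ℝ}
    (ha : 0 ≤ a) (h : ∀ i, c ≤ a * f i ^ 2) : c ≤ a * (⨅ i, f i) ^ 2 := by
  have hsqrt : √c ≤ √a * ⨅ i, f i := by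
    rw [Real.mul_iInf_of_nonneg (Real.sqrt_nonneg a)]
    refine le_ciInf fun i => ?_
    rw [← Real.sqrt_sq (hf i), ← Real.sqrt_mul ha]
    exact Real.sqrt_le_sqrt (h i)
  rw [Real.sqrt_le_iff, mul_pow, Real.sq_sqrt ha] at hsqrt
  exact hsqrt.2

lemma D_nonneg {d : ℕ} (U V : UG d) : 0 ≤ D U V :=
  Real.iInf_nonneg fun _ => norm_nonneg _

lemma two_mul_sub_two_mul_norm_trace_le_mul_D_sq {d : ℕ} (U V : UG d) :
    2 * d - 2 * ‖trace ((U : Matrix (Fin d) (Fin d) ℂ) * (V : Matrix (Fin d) (Fin d) ℂ)ᴴ)‖ ≤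
      d * D U V ^ 2 := by
  have : Nonempty {z : ℂ // ‖z‖ = 1} := ⟨⟨1, norm_one⟩⟩
  refine le_mul_ciInf_sq (fun _ => norm_nonneg _) d.cast_nonneg fun z => ?_
  simpa using two_mul_card_sub_two_mul_norm_trace_le U.2 V.2 z.2

theorem stmt1_general {d : ℕ} (U V : UG d) {ε : ℝ} (h : D U V ≤ ε) :
    (d : ℝ) ^ 2 * (1 - ε ^ 2) ≤
      ‖Matrix.trace ((U : Matrix (Fin d) (Fin d) ℂ) * (V : Matrix (Fin d) (Fin d) ℂ)ᴴ)‖ ^ 2 := by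
  set T := ‖Matrix.trace ((U : Matrix (Fin d) (Fin d) ℂ) * (V : Matrix (Fin d) (Fin d) ℂ)ᴴ)‖
  have hd : (0 : ℝ) ≤ d := d.cast_nonneg
  have hD : D U V ^ 2 ≤ ε ^ 2 := pow_le_pow_left₀ (D_nonneg U V) h 2
  have hlin : d * (2 - ε ^ 2) ≤ 2 * T := by
    linarith [two_mul_sub_two_mul_norm_trace_le_mul_D_sq U V, mul_le_mul_of_nonneg_left hD hd]
  rcases le_total 0 (d * (2 - ε ^ 2)) with hpos | hneg
  · nlinarith [mul_self_le_mul_self hpos hlin, sq_nonneg ((d : ℝ) * ε ^ 2)]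
  · nlinarith [sq_nonneg T, mul_nonneg hd hd]

theorem stmt1 {d : ℕ} (hd : 2 ≤ d) (U V : UG d) {ε : ℝ}
    (hε0 : 0 ≤ ε) (hε2 : ε ≤ Real.sqrt 2) (h : D U V ≤ ε) :
    (d : ℝ) ^ 2 * (1 - ε ^ 2) ≤
      ‖Matrix.trace ((U : Matrix (Fin d) (Fin d) ℂ) * (V : Matrix (Fin d) (Fin d) ℂ)ᴴ)‖ ^ 2 :=
  stmt1_general U V h

end Paper
end

section
/- Volumes of balls according to approximate unitary expanders (moment form): Let ν be a probability measure on U(d), let k ≥ 1 be a natural number, let δ ≥ 0, and suppose that for every V ∈ U(d) one has ∫ |tr(U·Vᴴ)|^{2k} dν(U) ≤ k! + d^{2k}·δ (this hypothesis holds when ν is a δ-approximate unitary k-expander). Then for every V ∈ U(d) and every ε ∈ (0,1): ν(B(V,ε)) ≤ (k! + d^{2k}·δ) / (d^{2k}·(1−ε²)^k). -/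
open MeasureTheory
open scoped ENNReal Matrix InnerProductSpace

/-! If `‖U - z • V‖ ≤ ε` for a phase `z`, every column satisfies
`‖U eᵢ - z • V eᵢ‖² = 2 - 2 Re (z ⟪U eᵢ, V eᵢ⟫) ≤ ε²`; summing over `i` gives
`|tr (U Vᴴ)| ≥ d (1 - ε² / 2)`, hence `|tr (U Vᴴ)|² ≥ d² (1 - ε²)` on the ball `B(V, ε)`.
Markov's inequality for `|tr (U Vᴴ)|^(2k)` then bounds `ν (B(V, ε))` by the `2k`-th moment
divided by `(d² (1 - ε²))^k`. -/

open Matrix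

lemma norm_sub_smul_sq_of_norm_eq_one {𝕜 E : Type*} [RCLike 𝕜] [NormedAddCommGroup E]
    [InnerProductSpace 𝕜 E] {x y : E} (hx : ‖x‖ = 1) (hy : ‖y‖ = 1) {z : 𝕜} (hz : ‖z‖ = 1) :
    ‖x - z • y‖ ^ 2 = 2 - 2 * RCLike.re (z * ⟪x, y⟫_𝕜) := by
  rw [norm_sub_sq (𝕜 := 𝕜), inner_smul_right, norm_smul, hx, hy, hz]
  ring

lemma MeasureTheory.mul_measure_le_lintegral_of_forall_le {α : Type*} [MeasurableSpace α]
    {μ : Measure α} {f : α → ℝ≥0∞} (hf : AEMeasurable f μ) {s : Set α} {c : ℝ≥0∞}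
    (h : ∀ x ∈ s, c ≤ f x) : c * μ s ≤ ∫⁻ x, f x ∂μ :=
  (mul_le_mul_right (measure_mono h) c).trans (mul_meas_ge_le_lintegral₀ hf c)

namespace Matrix
variable {𝕜 n : Type*} [RCLike 𝕜] [Fintype n] [DecidableEq n]

lemma toEuclideanCLM_single (A : Matrix n n 𝕜) (i : n) :
    toEuclideanCLM (𝕜 := 𝕜) A (EuclideanSpace.single i 1) = WithLp.toLp 2 (A.col i) := by
  rw [EuclideanSpace.single, ← PiLp.toLp_single, toEuclideanCLM_toLp, mulVec_single_one]

lemma inner_toEuclideanCLM_single (A B : Matrix n n 𝕜) (i : n) :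
    ⟪toEuclideanCLM (𝕜 := 𝕜) A (EuclideanSpace.single i 1),
      toEuclideanCLM (𝕜 := 𝕜) B (EuclideanSpace.single i 1)⟫_𝕜 = (Aᴴ * B) i i := by
  simp [toEuclideanCLM_single, PiLp.inner_apply, mul_apply, mul_comm]

lemma norm_toEuclideanCLM_of_mem_unitaryGroup {U : Matrix n n 𝕜} (hU : U ∈ unitaryGroup n 𝕜)
    (x : EuclideanSpace 𝕜 n) : ‖toEuclideanCLM (𝕜 := 𝕜) U x‖ = ‖x‖ :=
  ContinuousLinearMap.norm_map_of_mem_unitary (Unitary.map_mem _ hU) x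

lemma one_sub_sq_div_two_le_re_mul_diag {U V : Matrix n n 𝕜} (hU : U ∈ unitaryGroup n 𝕜)
    (hV : V ∈ unitaryGroup n 𝕜) {z : 𝕜} (hz : ‖z‖ = 1) (i : n) :
    1 - ‖toEuclideanCLM (𝕜 := 𝕜) (U - z • V)‖ ^ 2 / 2 ≤ RCLike.re (z * (Uᴴ * V) i i) := by
  set e : EuclideanSpace 𝕜 n := EuclideanSpace.single i 1
  have hcol : ‖toEuclideanCLM (𝕜 := 𝕜) U e - z • toEuclideanCLM (𝕜 := 𝕜) V e‖
      ≤ ‖toEuclideanCLM (𝕜 := 𝕜) (U - z • V)‖ := by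
    simpa [e] using (toEuclideanCLM (𝕜 := 𝕜) (U - z • V)).le_opNorm e
  have hnorm := norm_sub_smul_sq_of_norm_eq_one
    ((norm_toEuclideanCLM_of_mem_unitaryGroup hU e).trans (by simp [e]))
    ((norm_toEuclideanCLM_of_mem_unitaryGroup hV e).trans (by simp [e])) hz
  rw [inner_toEuclideanCLM_single] at hnorm
  nlinarith [norm_nonneg (toEuclideanCLM (𝕜 := 𝕜) U e - z • toEuclideanCLM (𝕜 := 𝕜) V e)]

lemma card_mul_one_sub_sq_div_two_le_norm_trace {U V : Matrix n n 𝕜}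
    (hU : U ∈ unitaryGroup n 𝕜) (hV : V ∈ unitaryGroup n 𝕜) {z : 𝕜} (hz : ‖z‖ = 1) :
    Fintype.card n * (1 - ‖toEuclideanCLM (𝕜 := 𝕜) (U - z • V)‖ ^ 2 / 2)
      ≤ ‖trace (U * Vᴴ)‖ :=
  calc Fintype.card n * (1 - ‖toEuclideanCLM (𝕜 := 𝕜) (U - z • V)‖ ^ 2 / 2)
      = ∑ _i : n, (1 - ‖toEuclideanCLM (𝕜 := 𝕜) (U - z • V)‖ ^ 2 / 2) := by
        rw [Finset.sum_const, Finset.card_univ, nsmul_eq_mul]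
    _ ≤ ∑ i, RCLike.re (z * (Uᴴ * V) i i) :=
      Finset.sum_le_sum fun i _ ↦ one_sub_sq_div_two_le_re_mul_diag hU hV hz i
    _ = RCLike.re (z * trace (Uᴴ * V)) := by simp [trace, Finset.mul_sum]
    _ ≤ ‖z * trace (Uᴴ * V)‖ := RCLike.re_le_norm _
    _ = ‖trace (U * Vᴴ)‖ := by
      rw [norm_mul, hz, one_mul, ← norm_star, ← trace_conjTranspose, conjTranspose_mul,
        conjTranspose_conjTranspose, trace_mul_comm]

end Matrix

namespace Paper
open ProbabilityTheory

lemma sqrt_two_sub_le_D {d : ℕ} (hd : 0 < (d : ℝ)) (U V : UG d) :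
    √(2 - 2 * ‖trace ((U : Matrix (Fin d) (Fin d) ℂ) * (V : Matrix (Fin d) (Fin d) ℂ)ᴴ)‖ / d)
      ≤ D U V := by
  have : Nonempty {z : ℂ // ‖z‖ = 1} := ⟨⟨1, norm_one⟩⟩
  refine le_ciInf fun z ↦ ?_
  have h := card_mul_one_sub_sq_div_two_le_norm_trace U.2 V.2 z.2
  rw [Fintype.card_fin] at h
  refine (Real.sqrt_le_sqrt ?_).trans_eq (Real.sqrt_sq (norm_nonneg _))
  rw [opNorm, sub_le_comm, le_div_iff₀ hd]
  linarith

lemma sq_mul_le_norm_trace_sq_of_mem_ball {d : ℕ} (hd : 0 < (d : ℝ)) {U V : UG d} {ε : ℝ}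
    (hε : 0 ≤ ε) (hU : U ∈ ball V ε) :
    (d : ℝ) ^ 2 * (1 - ε ^ 2)
      ≤ ‖trace ((U : Matrix (Fin d) (Fin d) ℂ) * (V : Matrix (Fin d) (Fin d) ℂ)ᴴ)‖ ^ 2 := by
  have h := (Real.sqrt_le_left hε).mp ((sqrt_two_sub_le_D hd U V).trans hU)
  rw [sub_le_comm, le_div_iff₀ hd] at h
  set T := ‖trace ((U : Matrix (Fin d) (Fin d) ℂ) * (V : Matrix (Fin d) (Fin d) ℂ)ᴴ)‖
  rcases le_or_gt (ε ^ 2) 2 with hε2 | hε2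
  · have hT : d * (1 - ε ^ 2 / 2) ≤ T := by linarith
    nlinarith [mul_self_le_mul_self (by nlinarith) hT, sq_nonneg ((d : ℝ) * ε ^ 2)]
  · nlinarith [sq_nonneg T]

theorem stmt2_general {d : ℕ} (hd : 2 ≤ d) (ν : Measure (UG d))
    (k : ℕ) (δ : ℝ)
    (hmom : ∀ V : UG d,
      ∫⁻ U, ENNReal.ofReal
          (‖Matrix.trace ((U : Matrix (Fin d) (Fin d) ℂ) *
              (V : Matrix (Fin d) (Fin d) ℂ)ᴴ)‖ ^ (2 * k)) ∂ν
        ≤ ENNReal.ofReal ((k.factorial : ℝ) + (d : ℝ) ^ (2 * k) * δ)) :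
    ∀ (V : UG d) (ε : ℝ), 0 < ε → ε < 1 →
      ν (ball V ε) ≤ ENNReal.ofReal
        (((k.factorial : ℝ) + (d : ℝ) ^ (2 * k) * δ) /
          ((d : ℝ) ^ (2 * k) * (1 - ε ^ 2) ^ k)) := by
  intro V ε hε0 hε1
  have hd0 : (0 : ℝ) < d := by exact_mod_cast (by omega : 0 < d)
  have hε2 : 0 < 1 - ε ^ 2 := by nlinarith
  have hc : 0 < (d : ℝ) ^ (2 * k) * (1 - ε ^ 2) ^ k := by positivity
  have hmeas : Measurable fun U : UG d ↦ ENNReal.ofReal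
      (‖trace ((U : Matrix (Fin d) (Fin d) ℂ) * (V : Matrix (Fin d) (Fin d) ℂ)ᴴ)‖ ^ (2 * k)) := by
    fun_prop
  have hmarkov := mul_measure_le_lintegral_of_forall_le (μ := ν) hmeas.aemeasurable
    (s := ball V ε) fun U hU ↦ ENNReal.ofReal_le_ofReal <|
      calc (d : ℝ) ^ (2 * k) * (1 - ε ^ 2) ^ k = ((d : ℝ) ^ 2 * (1 - ε ^ 2)) ^ k := by
            rw [mul_pow, ← pow_mul]
        _ ≤ _ := pow_le_pow_left₀ (by positivity)
          (sq_mul_le_norm_trace_sq_of_mem_ball hd0 hε0.le hU) k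
        _ = _ := by rw [← pow_mul]
  rw [ENNReal.ofReal_div_of_pos hc, ENNReal.le_div_iff_mul_le (.inl (ENNReal.ofReal_pos.2 hc).ne')
    (.inl ENNReal.ofReal_ne_top), mul_comm]
  exact hmarkov.trans (hmom V)

theorem stmt2 {d : ℕ} (hd : 2 ≤ d) (ν : Measure (UG d)) [IsProbabilityMeasure ν]
    (k : ℕ) (hk : 1 ≤ k) (δ : ℝ) (hδ : 0 ≤ δ)
    (hmom : ∀ V : UG d,
      ∫⁻ U, ENNReal.ofReal
          (‖Matrix.trace ((U : Matrix (Fin d) (Fin d) ℂ) *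
              (V : Matrix (Fin d) (Fin d) ℂ)ᴴ)‖ ^ (2 * k)) ∂ν
        ≤ ENNReal.ofReal ((k.factorial : ℝ) + (d : ℝ) ^ (2 * k) * δ)) :
    ∀ (V : UG d) (ε : ℝ), 0 < ε → ε < 1 →
      ν (ball V ε) ≤ ENNReal.ofReal
        (((k.factorial : ℝ) + (d : ℝ) ^ (2 * k) * δ) /
          ((d : ℝ) ^ (2 * k) * (1 - ε ^ 2) ^ k)) :=
  stmt2_general hd ν k δ hmom

end Paper
end

section
/- Volumes of balls in the space of pure states according to approximate state designs (moment form): Let ν be a probability measure on S(d), let φ ∈ S(d), let k ≥ 1 be a natural number, let δ ≥ 0, and suppose ∫ |⟨ψ,φ⟩|^{2k} dν(ψ) ≤ δ + (C(d+k−1,k))⁻¹, where C(d+k−1,k) is the binomial coefficient (this hypothesis holds when ν is induced by a δ-approximate unitary k-expander). Then for every ε ∈ (0,1): ν(B_S(φ,ε)) ≤ (k! + d^k·δ) / (d^k·(1−ε²)^k). -/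
/-!
Points of `B_S(φ, ε)` satisfy `|⟨ψ, φ⟩|^{2k} ≥ (1 - ε²)^k`, so Markov's inequality bounds
`ν(B_S(φ, ε))` by the `2k`-th moment divided by `(1 - ε²)^k`. The moment bound is then weakened
with `d^k ≤ (d + k - 1)(d + k - 2) ⋯ d = k! · C(d + k - 1, k)`.
-/

open MeasureTheory
open scoped ENNReal Matrix InnerProductSpace

namespace Paper

theorem pow_le_factorial_mul_choose {d : ℕ} (hd : 0 < d) (k : ℕ) :
    d ^ k ≤ k.factorial * (d + k - 1).choose k := by
  rw [← Nat.descFactorial_eq_factorial_mul_choose]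
  simpa [show d + k - 1 + 1 - k = d by omega] using (d + k - 1).pow_sub_le_descFactorial k

theorem add_inv_choose_le {d : ℕ} (hd : 0 < d) (k : ℕ) (δ : ℝ) :
    δ + (((d + k - 1).choose k : ℕ) : ℝ)⁻¹ ≤ ((k.factorial : ℝ) + (d : ℝ) ^ k * δ) / (d : ℝ) ^ k := by
  have hdk : (0 : ℝ) < (d : ℝ) ^ k := by positivity
  have hC : (0 : ℝ) < ((d + k - 1).choose k : ℕ) := by
    exact_mod_cast Nat.choose_pos (by omega)
  have hinv : (((d + k - 1).choose k : ℕ) : ℝ)⁻¹ ≤ (k.factorial : ℝ) / (d : ℝ) ^ k := by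
    rw [inv_eq_one_div, div_le_div_iff₀ hC hdk, one_mul]
    exact_mod_cast pow_le_factorial_mul_choose hd k
  rw [add_div, mul_div_cancel_left₀ _ hdk.ne']
  linarith

theorem one_sub_sq_le_norm_inner_sq_of_mem_ballS {d : ℕ} {φ ψ : EV d} {ε : ℝ}
    (hψ : ψ ∈ ballS φ ε) : 1 - ε ^ 2 ≤ ‖⟪ψ, φ⟫_ℂ‖ ^ 2 := by
  have := (Real.sqrt_le_iff.mp hψ.2).2
  linarith

theorem ofReal_pow_mul_measure_ballS_le_lintegral {d : ℕ} (ν : Measure (EV d)) (φ : EV d)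
    (k : ℕ) (ε : ℝ) :
    ENNReal.ofReal (1 - ε ^ 2) ^ k * ν (ballS φ ε)
      ≤ ∫⁻ ψ, ENNReal.ofReal (‖⟪ψ, φ⟫_ℂ‖ ^ (2 * k)) ∂ν := by
  have hf : AEMeasurable (fun ψ : EV d ↦ ENNReal.ofReal (‖⟪ψ, φ⟫_ℂ‖ ^ (2 * k))) ν := by
    fun_prop
  have hball : ballS φ ε
      ⊆ {ψ | ENNReal.ofReal (1 - ε ^ 2) ^ k ≤ ENNReal.ofReal (‖⟪ψ, φ⟫_ℂ‖ ^ (2 * k))} := by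
    intro ψ hψ
    rw [Set.mem_ofPred_eq, pow_mul, ENNReal.ofReal_pow (by positivity)]
    gcongr
    exact one_sub_sq_le_norm_inner_sq_of_mem_ballS hψ
  calc ENNReal.ofReal (1 - ε ^ 2) ^ k * ν (ballS φ ε)
      ≤ ENNReal.ofReal (1 - ε ^ 2) ^ k * ν {ψ | ENNReal.ofReal (1 - ε ^ 2) ^ k
          ≤ ENNReal.ofReal (‖⟪ψ, φ⟫_ℂ‖ ^ (2 * k))} := by gcongr
    _ ≤ _ := mul_meas_ge_le_lintegral₀ hf _

theorem dim_pos_of_norm_eq_one {d : ℕ} {φ : EV d} (hφ : ‖φ‖ = 1) : 0 < d := by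
  rcases d with _ | d
  · simp [Subsingleton.elim φ 0] at hφ
  · exact d.succ_pos

theorem stmt3_general {d : ℕ} (ν : Measure (EV d)) (φ : EV d) (hφ : ‖φ‖ = 1) (k : ℕ) (δ : ℝ)
    (hmom : ∫⁻ ψ, ENNReal.ofReal (‖⟪ψ, φ⟫_ℂ‖ ^ (2 * k)) ∂ν
        ≤ ENNReal.ofReal (δ + (((d + k - 1).choose k : ℝ))⁻¹)) :
    ∀ ε : ℝ, 0 < ε → ε < 1 →
      ν (ballS φ ε) ≤ ENNReal.ofReal
        (((k.factorial : ℝ) + (d : ℝ) ^ k * δ) / ((d : ℝ) ^ k * (1 - ε ^ 2) ^ k)) := by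
  intro ε hε hε1
  have hpos : 0 < (1 - ε ^ 2) ^ k := pow_pos (by nlinarith) k
  have hc : ENNReal.ofReal (1 - ε ^ 2) ^ k = ENNReal.ofReal ((1 - ε ^ 2) ^ k) :=
    (ENNReal.ofReal_pow (by nlinarith) k).symm
  calc ν (ballS φ ε)
      ≤ (∫⁻ ψ, ENNReal.ofReal (‖⟪ψ, φ⟫_ℂ‖ ^ (2 * k)) ∂ν) / ENNReal.ofReal ((1 - ε ^ 2) ^ k) := by
        rw [ENNReal.le_div_iff_mul_le (.inl (ENNReal.ofReal_pos.mpr hpos).ne')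
          (.inl ENNReal.ofReal_ne_top), mul_comm, ← hc]
        exact ofReal_pow_mul_measure_ballS_le_lintegral ν φ k ε
    _ ≤ ENNReal.ofReal ((δ + (((d + k - 1).choose k : ℝ))⁻¹) / (1 - ε ^ 2) ^ k) := by
        rw [ENNReal.ofReal_div_of_pos hpos]
        gcongr
    _ ≤ _ := by
        rw [← div_div]
        gcongr
        exact add_inv_choose_le (dim_pos_of_norm_eq_one hφ) k δ

theorem stmt3 {d : ℕ} (hd : 2 ≤ d) (ν : Measure (EV d)) [IsProbabilityMeasure ν]
    (φ : EV d) (hφ : ‖φ‖ = 1) (k : ℕ) (hk : 1 ≤ k) (δ : ℝ) (hδ : 0 ≤ δ)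
    (hmom : ∫⁻ ψ, ENNReal.ofReal (‖⟪ψ, φ⟫_ℂ‖ ^ (2 * k)) ∂ν
        ≤ ENNReal.ofReal (δ + (((d + k - 1).choose k : ℝ))⁻¹)) :
    ∀ ε : ℝ, 0 < ε → ε < 1 →
      ν (ballS φ ε) ≤ ENNReal.ofReal
        (((k.factorial : ℝ) + (d : ℝ) ^ k * δ) / ((d : ℝ) ^ k * (1 - ε ^ 2) ^ k)) :=
  stmt3_general ν φ hφ k δ hmom

end Paper
end

section
/- Tail bound for the overlap integral (Beta tail): Let d ≥ 2 be a natural number, let ε ∈ (0,1], and let k be a natural number with k ≥ 4d/ε². Then C(d+k−1,k) · ∫₀^{√(1−ε²)} x^k·(d−1)·(1−x)^{d−2} dx ≤ exp(−k·ε⁴/8), where C(d+k−1,k) is the binomial coefficient and the integral is the Lebesgue integral over the real interval [0, √(1−ε²)]. -/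
open MeasureTheory
open scoped ENNReal Matrix InnerProductSpace

/-!
Write `y = 1 - x`. On `[0, √(1 - ε²)]` we have `y ≥ a := ε² / 2`, and
`x ≤ exp (-y - y² / 2)` gives `x ^ k ≤ exp (-k a² / 2) · exp (-k y)`: the first factor is the
claimed bound. Half of `exp (-k y)` absorbs `y ^ (d - 2)` at the price of `(d - 2)! (2 / k) ^ (d - 2)`,
and integrating the other half gives `(2 / k) exp (-k a / 2)`. Since `k ≥ 4 d / ε²`, the
prefactor `C(d + k - 1, k) (d - 1)! (2 / k) ^ (d - 1) ≤ e ^ (d - 1)` is beaten by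
`exp (-k a / 2) ≤ exp (-d)`.
-/

namespace Paper

open Real Set
open scoped Nat

lemma one_sub_le_exp_neg_add_sq_div_two {y : ℝ} (h0 : 0 ≤ y) (h1 : y ≤ 1) :
    1 - y ≤ exp (-(y + y ^ 2 / 2)) := by
  rcases h1.lt_or_eq with h1 | rfl
  · have hlog : y + y ^ 2 / 2 ≤ -log (1 - y) := by
      have := sum_le_hasSum (Finset.range 2) (fun i _ => by positivity)
        (hasSum_pow_div_log_of_abs_lt_one (by rwa [abs_of_nonneg h0]))
      norm_num [Finset.sum_range_succ] at this
      linarith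
    calc 1 - y = exp (log (1 - y)) := (exp_log (by linarith)).symm
      _ ≤ _ := exp_le_exp.2 (by linarith)
  · simpa using (exp_pos _).le

lemma pow_le_exp_mul_exp_of_le_one_sub {x a : ℝ} (k : ℕ) (hx : 0 ≤ x) (ha : 0 ≤ a)
    (hxa : x ≤ 1 - a) :
    x ^ k ≤ exp (-(k * a ^ 2 / 2)) * exp (-(k * (1 - x))) := by
  have hx' : x ≤ exp (-((1 - x) + (1 - x) ^ 2 / 2)) := by
    simpa using one_sub_le_exp_neg_add_sq_div_two (y := 1 - x) (by linarith) (by linarith)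
  have ha2 : a ^ 2 ≤ (1 - x) ^ 2 := pow_le_pow_left₀ ha (by linarith) 2
  calc x ^ k ≤ exp (-((1 - x) + (1 - x) ^ 2 / 2)) ^ k := pow_le_pow_left₀ hx hx' k
    _ = exp (-(k * (1 - x) ^ 2 / 2)) * exp (-(k * (1 - x))) := by
      rw [← exp_nat_mul, ← exp_add]; ring_nf
    _ ≤ exp (-(k * a ^ 2 / 2)) * exp (-(k * (1 - x))) := by gcongr

lemma pow_mul_exp_neg_mul_le {y c : ℝ} (hy : 0 ≤ y) (hc : 0 < c) (m : ℕ) :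
    y ^ m * exp (-(c * y)) ≤ m ! / c ^ m := by
  have h := pow_div_factorial_le_exp _ (mul_nonneg hc.le hy) m
  rw [div_le_iff₀ (by positivity), mul_pow] at h
  rw [le_div_iff₀ (by positivity), exp_neg]
  calc y ^ m * (exp (c * y))⁻¹ * c ^ m = (c ^ m * y ^ m) * (exp (c * y))⁻¹ := by ring
    _ ≤ (exp (c * y) * m !) * (exp (c * y))⁻¹ := by gcongr
    _ = m ! := by field_simp

lemma setIntegral_Icc_exp_mul_sub_le {c : ℝ} (hc : 0 < c) (u v w : ℝ) :
    ∫ x in Icc u v, exp (c * (x - w)) ≤ exp (c * (v - w)) / c := by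
  have hsplit : ∀ x, exp (c * (x - w)) = exp (c * x) * exp (-(c * w)) := fun x => by
    rw [← exp_add]; ring_nf
  have hint : IntegrableOn (fun x => exp (c * (x - w))) (Iic v) := by
    simp_rw [hsplit]; exact (integrableOn_exp_mul_Iic hc v).mul_const _
  calc ∫ x in Icc u v, exp (c * (x - w))
      ≤ ∫ x in Iic v, exp (c * (x - w)) :=
        setIntegral_mono_set hint (Filter.Eventually.of_forall fun _ => (exp_pos _).le)
          (Filter.Eventually.of_forall Icc_subset_Iic_self)
    _ = exp (c * (v - w)) / c := by
      simp_rw [hsplit, integral_mul_const, integral_exp_mul_Iic hc]; ring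

lemma pow_mul_one_sub_pow_le {x a : ℝ} {k : ℕ} (m : ℕ) (hk : 0 < k) (hx : 0 ≤ x) (ha : 0 ≤ a)
    (hxa : x ≤ 1 - a) :
    x ^ k * ((m : ℝ) + 1) * (1 - x) ^ m
      ≤ exp (-(k * a ^ 2 / 2)) * ((m + 1)! / (k / 2 : ℝ) ^ m) * exp (k / 2 * (x - 1)) := by
  have hc : (0 : ℝ) < k / 2 := by positivity
  have hpow := pow_le_exp_mul_exp_of_le_one_sub k hx ha hxa
  have hgain := pow_mul_exp_neg_mul_le (y := 1 - x) (by linarith) hc m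
  have hhalf : exp (-(k * (1 - x))) = exp (-(k / 2 * (1 - x))) * exp (k / 2 * (x - 1)) := by
    rw [← exp_add]; ring_nf
  calc x ^ k * ((m : ℝ) + 1) * (1 - x) ^ m
      ≤ exp (-(k * a ^ 2 / 2)) * exp (-(k * (1 - x))) * ((m : ℝ) + 1) * (1 - x) ^ m := by
        have : 0 ≤ 1 - x := by linarith
        gcongr
    _ = exp (-(k * a ^ 2 / 2)) * ((m + 1) * ((1 - x) ^ m * exp (-(k / 2 * (1 - x)))))
          * exp (k / 2 * (x - 1)) := by rw [hhalf]; ring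
    _ ≤ exp (-(k * a ^ 2 / 2)) * ((m + 1) * (m ! / (k / 2 : ℝ) ^ m)) * exp (k / 2 * (x - 1)) := by
        gcongr
    _ = exp (-(k * a ^ 2 / 2)) * ((m + 1)! / (k / 2 : ℝ) ^ m) * exp (k / 2 * (x - 1)) := by
        push_cast [Nat.factorial_succ]; ring

lemma setIntegral_beta_tail_le {a s : ℝ} {k : ℕ} (m : ℕ) (hk : 0 < k) (ha : 0 ≤ a)
    (hsa : s ≤ 1 - a) :
    ∫ x in Icc 0 s, x ^ k * ((m : ℝ) + 1) * (1 - x) ^ m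
      ≤ exp (-(k * a ^ 2 / 2)) * ((m + 1)! / (k / 2 : ℝ) ^ (m + 1) * exp (-(k / 2 * a))) := by
  have hc : (0 : ℝ) < k / 2 := by positivity
  set K := exp (-(k * a ^ 2 / 2)) * ((m + 1)! / (k / 2 : ℝ) ^ m)
  have hpt : ∀ x ∈ Icc 0 s,
      x ^ k * ((m : ℝ) + 1) * (1 - x) ^ m ≤ K * exp (k / 2 * (x - 1)) :=
    fun x hx => pow_mul_one_sub_pow_le m hk hx.1 ha (hx.2.trans hsa)
  calc ∫ x in Icc 0 s, x ^ k * ((m : ℝ) + 1) * (1 - x) ^ m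
      ≤ ∫ x in Icc 0 s, K * exp (k / 2 * (x - 1)) :=
        setIntegral_mono_on (Continuous.integrableOn_Icc (by fun_prop))
          (Continuous.integrableOn_Icc (by fun_prop)) measurableSet_Icc hpt
    _ ≤ K * (exp (k / 2 * (s - 1)) / (k / 2)) := by
        rw [integral_const_mul]
        exact mul_le_mul_of_nonneg_left (setIntegral_Icc_exp_mul_sub_le hc _ _ _) (by positivity)
    _ ≤ K * (exp (-(k / 2 * a)) / (k / 2)) := by gcongr; nlinarith
    _ = _ := by simp only [K]; ring

lemma choose_mul_factorial_div_pow_mul_exp_le_one {a : ℝ} {k : ℕ} (m : ℕ) (ha : a ≤ 1 / 2)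
    (hka : 2 * ((m : ℝ) + 2) ≤ k * a) :
    ((m + 1 + k).choose k : ℝ) * ((m + 1)! / (k / 2 : ℝ) ^ (m + 1) * exp (-(k / 2 * a))) ≤ 1 := by
  have hk : (4 : ℝ) * (m + 2) ≤ k := by nlinarith
  have hk0 : (0 : ℝ) < k := by linarith
  have hchoose : ((m + 1 + k).choose k : ℝ) * (m + 1)! ≤ ((m : ℝ) + 1 + k) ^ (m + 1) := by
    rw [← Nat.choose_symm_add, ← le_div_iff₀ (by positivity)]
    exact_mod_cast Nat.choose_le_pow_div (m + 1) (m + 1 + k)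
  have hratio : ((m : ℝ) + 1 + k) / (k / 2) ≤ exp 1 := by
    rw [div_le_iff₀ (by positivity)]
    nlinarith [exp_one_gt_d9]
  calc ((m + 1 + k).choose k : ℝ) * ((m + 1)! / (k / 2 : ℝ) ^ (m + 1) * exp (-(k / 2 * a)))
      = ((m + 1 + k).choose k : ℝ) * (m + 1)! / (k / 2 : ℝ) ^ (m + 1) * exp (-(k / 2 * a)) := by
        ring
    _ ≤ (((m : ℝ) + 1 + k) / (k / 2)) ^ (m + 1) * exp (-(k / 2 * a)) := by
        rw [div_pow ((m : ℝ) + 1 + k)]; gcongr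
    _ ≤ exp 1 ^ (m + 1) * exp (-((m : ℝ) + 2)) := by gcongr; linarith
    _ ≤ 1 := by
        rw [← exp_nat_mul, ← exp_add, exp_le_one_iff]; push_cast; linarith

theorem stmt4 {d k : ℕ} (hd : 2 ≤ d) {ε : ℝ} (hε0 : 0 < ε) (hε1 : ε ≤ 1)
    (hk : 4 * (d : ℝ) / ε ^ 2 ≤ (k : ℝ)) :
    ((d + k - 1).choose k : ℝ) *
        ∫ x in Set.Icc (0 : ℝ) (Real.sqrt (1 - ε ^ 2)),
          x ^ k * ((d : ℝ) - 1) * (1 - x) ^ (d - 2)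
      ≤ Real.exp (-((k : ℝ) * ε ^ 4 / 8)) := by
  obtain ⟨m, rfl⟩ : ∃ m, d = m + 2 := ⟨d - 2, by omega⟩
  have hε2 : 0 < ε ^ 2 := by positivity
  have hka : 2 * ((m : ℝ) + 2) ≤ k * (ε ^ 2 / 2) := by
    rw [div_le_iff₀ hε2] at hk; push_cast at hk; linarith
  have hk0 : 0 < k := by
    have : (0 : ℝ) < k * (ε ^ 2 / 2) := by linarith
    exact_mod_cast pos_of_mul_pos_left this (by positivity)
  have hs : √(1 - ε ^ 2) ≤ 1 - ε ^ 2 / 2 :=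
    sqrt_le_iff.2 ⟨by nlinarith, by nlinarith⟩
  have hI := setIntegral_beta_tail_le m hk0 (by positivity) hs
  have hC := choose_mul_factorial_div_pow_mul_exp_le_one m (by nlinarith) hka
  have hd1 : ((m + 2 : ℕ) : ℝ) - 1 = m + 1 := by push_cast; ring
  rw [hd1, Nat.add_sub_cancel, show m + 2 + k - 1 = m + 1 + k by omega]
  calc ((m + 1 + k).choose k : ℝ) * ∫ x in Icc 0 √(1 - ε ^ 2), x ^ k * ((m : ℝ) + 1) * (1 - x) ^ m
      ≤ ((m + 1 + k).choose k : ℝ) * (exp (-(k * (ε ^ 2 / 2) ^ 2 / 2)) *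
          ((m + 1)! / (k / 2 : ℝ) ^ (m + 1) * exp (-(k / 2 * (ε ^ 2 / 2))))) :=
        mul_le_mul_of_nonneg_left hI (by positivity)
    _ = exp (-(k * (ε ^ 2 / 2) ^ 2 / 2)) * (((m + 1 + k).choose k : ℝ) *
          ((m + 1)! / (k / 2 : ℝ) ^ (m + 1) * exp (-(k / 2 * (ε ^ 2 / 2))))) := by ring
    _ ≤ exp (-(k * (ε ^ 2 / 2) ^ 2 / 2)) * 1 := by gcongr
    _ = exp (-(k * ε ^ 4 / 8)) := by rw [mul_one]; ring_nf

end Paper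
end

section
/- The overlap integral is at most half the state-ball volume: Let d ≥ 2 be a natural number, let ε ∈ (0, 1/4), and let k be a natural number with k ≥ 16·(d/ε⁴)·log(1/ε). Then C(d+k−1,k) · ∫₀^{√(1−ε²)} x^k·(d−1)·(1−x)^{d−2} dx ≤ (1/2)·ε^{2d−2}, where C(d+k−1,k) is the binomial coefficient and the integral is the Lebesgue integral over the real interval [0, √(1−ε²)]. -/
/-!
On `[0, a]` with `a = √(1 - ε²) ≤ exp (-ε² / 2)` the integrand is at most `(d - 1) a ^ k`, so the
integral is at most `(d - 1) exp (-k ε² / 2)`. On the other side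
`C(d+k-1, d-1) ≤ (d+k-1)^(d-1) / (d-1)! ≤ (8 / ε²)^(d-1) exp (k ε² / 4)` by `xⁿ / n! ≤ eˣ`,
using `d ≤ k`. What is left, `2 (d - 1) (8 / ε⁴)^(d-1) ≤ exp (k ε² / 4)`, is much weaker than
the hypothesis on `k`, which makes `k ε² / 4 ≥ 64 d log (1 / ε)`.
-/

open MeasureTheory
open scoped ENNReal Matrix InnerProductSpace

open Real

theorem Nat.choose_le_exp_mul_div_pow (n r : ℕ) {s : ℝ} (hs : 0 < s) :
    (n.choose r : ℝ) ≤ exp (s * n) / s ^ r := by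
  calc (n.choose r : ℝ) ≤ (n : ℝ) ^ r / r.factorial := Nat.choose_le_pow_div r n
    _ = (s * n) ^ r / r.factorial / s ^ r := by field_simp; ring
    _ ≤ exp (s * n) / s ^ r := by
      gcongr
      exact Real.pow_div_factorial_le_exp _ (by positivity) r

theorem Real.sqrt_one_sub_pow_le_exp (y : ℝ) (k : ℕ) : √(1 - y) ^ k ≤ exp (-(k * y / 2)) := by
  have h : √(1 - y) ≤ exp (-y / 2) := by
    rw [exp_half]
    exact sqrt_le_sqrt (by linarith [add_one_le_exp (-y)])
  calc √(1 - y) ^ k ≤ exp (-y / 2) ^ k := by gcongr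
    _ = exp (-(k * y / 2)) := by rw [← exp_nat_mul]; ring_nf

theorem setIntegral_Icc_pow_mul_mul_one_sub_pow_le {a c : ℝ} (ha0 : 0 ≤ a) (ha1 : a ≤ 1)
    (hc : 0 ≤ c) (k n : ℕ) :
    ∫ x in Set.Icc 0 a, x ^ k * c * (1 - x) ^ n ≤ c * a ^ k := by
  have hbound : ∀ x ∈ Set.Icc 0 a, x ^ k * c * (1 - x) ^ n ≤ c * a ^ k := by
    rintro x ⟨hx0, hxa⟩
    have h1x : 1 - x ≤ 1 := by linarith
    calc x ^ k * c * (1 - x) ^ n ≤ a ^ k * c * 1 := by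
          gcongr
          · exact pow_nonneg (by linarith) n
          · exact pow_le_one₀ (by linarith) h1x
      _ = c * a ^ k := by ring
  calc ∫ x in Set.Icc 0 a, x ^ k * c * (1 - x) ^ n
      ≤ ∫ _ in Set.Icc 0 a, c * a ^ k :=
        setIntegral_mono_on (Continuous.integrableOn_Icc (by fun_prop))
          (integrableOn_const measure_Icc_lt_top.ne) measurableSet_Icc hbound
    _ = a * (c * a ^ k) := by simp [ha0]
    _ ≤ c * a ^ k := by
      nlinarith [mul_nonneg hc (pow_nonneg ha0 k)]

theorem two_mul_mul_eight_mul_pow_four_pow_le {u : ℝ} (hu : 4 ≤ u) (m : ℕ) :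
    2 * m * (8 * u ^ 4) ^ m ≤ u ^ (6 * m) := by
  have h2m : (2 * m : ℝ) ≤ 2 ^ m := by
    exact_mod_cast Nat.mul_le_pow (by norm_num) m
  calc 2 * m * (8 * u ^ 4) ^ m ≤ 2 ^ m * (8 * u ^ 4) ^ m := by gcongr
    _ = (16 * u ^ 4) ^ m := by rw [← mul_pow]; ring
    _ ≤ (u ^ 2 * u ^ 4) ^ m := by gcongr; nlinarith
    _ = u ^ (6 * m) := by rw [← pow_add, ← pow_mul, mul_comm]

theorem mul_eight_div_sq_pow_mul_exp_neg_le {ε : ℝ} (hε0 : 0 < ε) (hε1 : ε < 1 / 4) {m : ℕ} {t : ℝ}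
    (ht : 6 * m * log (1 / ε) ≤ t) :
    m * (8 / ε ^ 2) ^ m * exp (-t) ≤ 1 / 2 * ε ^ (2 * m) := by
  set u := 1 / ε with hu
  have hu4 : 4 ≤ u := by rw [hu, le_div_iff₀ hε0]; linarith
  have hpow : u ^ (6 * m) ≤ exp t := by
    rw [← exp_log (by positivity : 0 < u), ← exp_nat_mul, exp_le_exp]
    push_cast
    linarith
  have hsplit : (8 / ε ^ 2) ^ m = (8 * u ^ 4) ^ m * ε ^ (2 * m) := by
    rw [pow_mul, ← mul_pow, hu]
    field_simp
  calc m * (8 / ε ^ 2) ^ m * exp (-t)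
      = (2 * m * (8 * u ^ 4) ^ m) * exp (-t) * (1 / 2 * ε ^ (2 * m)) := by rw [hsplit]; ring
    _ ≤ exp t * exp (-t) * (1 / 2 * ε ^ (2 * m)) := by
      gcongr
      exact (two_mul_mul_eight_mul_pow_four_pow_le hu4 m).trans hpow
    _ = 1 / 2 * ε ^ (2 * m) := by rw [← exp_add, add_neg_cancel, exp_zero, one_mul]

namespace Paper
open ProbabilityTheory

theorem stmt6 {d k : ℕ} (hd : 2 ≤ d) {ε : ℝ} (hε0 : 0 < ε) (hε1 : ε < 1 / 4)
    (hk : 16 * (d : ℝ) / ε ^ 4 * Real.log (1 / ε) ≤ (k : ℝ)) :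
    ((d + k - 1).choose k : ℝ) *
        ∫ x in Set.Icc (0 : ℝ) (Real.sqrt (1 - ε ^ 2)),
          x ^ k * ((d : ℝ) - 1) * (1 - x) ^ (d - 2)
      ≤ (1 / 2) * ε ^ (2 * d - 2) := by
  obtain ⟨m, rfl⟩ : ∃ m, d = m + 1 := ⟨d - 1, by omega⟩
  rw [show m + 1 + k - 1 = m + k by omega, show 2 * (m + 1) - 2 = 2 * m by omega,
    Nat.cast_add_one, add_sub_cancel_right]
  push_cast at hk
  have hε2 : ε ^ 2 ≤ 1 / 16 := by nlinarith
  have hlog : 3 / 4 ≤ log (1 / ε) := by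
    have := one_sub_inv_le_log_of_pos (one_div_pos.mpr hε0)
    simp only [one_div, inv_inv] at this ⊢
    linarith
  have hkε : 256 * (m + 1) * log (1 / ε) ≤ k * ε ^ 2 := by
    have h : 16 * (m + 1) * log (1 / ε) ≤ k * ε ^ 2 * ε ^ 2 := by
      rw [div_mul_eq_mul_div, div_le_iff₀ (by positivity)] at hk
      linarith
    nlinarith [mul_le_mul_of_nonneg_left hε2 (by positivity : (0 : ℝ) ≤ k * ε ^ 2)]
  have hmk : (m : ℝ) ≤ k := by nlinarith
  have hchoose : ((m + k).choose k : ℝ) ≤ exp (k * ε ^ 2 / 4) * (8 / ε ^ 2) ^ m := by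
    rw [← Nat.choose_symm_add]
    calc ((m + k).choose m : ℝ) ≤ exp (ε ^ 2 / 8 * (m + k : ℕ)) / (ε ^ 2 / 8) ^ m :=
          Nat.choose_le_exp_mul_div_pow _ _ (by positivity)
      _ = exp (ε ^ 2 / 8 * (m + k : ℕ)) * (8 / ε ^ 2) ^ m := by
          rw [div_eq_mul_inv, ← inv_pow, inv_div]
      _ ≤ exp (k * ε ^ 2 / 4) * (8 / ε ^ 2) ^ m := by
          gcongr
          push_cast
          nlinarith
  have hint : ∫ x in Set.Icc 0 √(1 - ε ^ 2), x ^ k * (m : ℝ) * (1 - x) ^ (m + 1 - 2)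
      ≤ m * exp (-(k * ε ^ 2 / 2)) := by
    grw [setIntegral_Icc_pow_mul_mul_one_sub_pow_le (sqrt_nonneg _)
      (sqrt_le_one.mpr (by linarith [sq_nonneg ε])) (Nat.cast_nonneg m), sqrt_one_sub_pow_le_exp]
  calc ((m + k).choose k : ℝ) *
        ∫ x in Set.Icc 0 √(1 - ε ^ 2), x ^ k * (m : ℝ) * (1 - x) ^ (m + 1 - 2)
      ≤ exp (k * ε ^ 2 / 4) * (8 / ε ^ 2) ^ m * (m * exp (-(k * ε ^ 2 / 2))) := by
        grw [hint, hchoose]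
    _ = m * (8 / ε ^ 2) ^ m * exp (-(k * ε ^ 2 / 4)) := by
        rw [show -(k * ε ^ 2 / 4) = k * ε ^ 2 / 4 + -(k * ε ^ 2 / 2) by ring, exp_add]; ring
    _ ≤ 1 / 2 * ε ^ (2 * m) := mul_eight_div_sq_pow_mul_exp_neg_le hε0 hε1 (by nlinarith)

end Paper
end

section
/- Typical unitaries from equidistributed ensembles have near-maximal complexity: Let 𝒢 be a gate set in U(d), let ν be a probability measure on U(d) that is (α,β)-equidistributed at scale ε with β·ε ≤ 1, let Δ ∈ (0,1), and let r be a natural number such that |𝒢|^{r+1}·(c^o·β·ε)^{d²−1} ≤ Δ. Then ν({U ∈ U(d) : ∃ W ∈ 𝒢^{≤r} with D(U,W) ≤ ε}) ≤ Δ; i.e., with ν-probability at least 1−Δ the ε-complexity of U exceeds r. -/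
open MeasureTheory
open scoped ENNReal Matrix InnerProductSpace

namespace Paper
open ProbabilityTheory

/-- Products of length exactly `k`, as a finset. -/
noncomputable def Ef {d : ℕ} (𝒢 : Finset (UG d)) (k : ℕ) : Finset (UG d) :=
  Nat.rec {1} (fun _ S => (𝒢 ×ˢ S).image (fun p => p.1 * p.2)) k

lemma Ef_zero {d : ℕ} (𝒢 : Finset (UG d)) : Ef 𝒢 0 = {1} := rfl

lemma Ef_succ {d : ℕ} (𝒢 : Finset (UG d)) (k : ℕ) :
    Ef 𝒢 (k + 1) = (𝒢 ×ˢ Ef 𝒢 k).image (fun p => p.1 * p.2) := rfl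

lemma prod_mem_Ef {d : ℕ} (𝒢 : Finset (UG d)) (l : List (UG d))
    (hl : ∀ g ∈ l, g ∈ 𝒢) : l.prod ∈ Ef 𝒢 l.length := by
  induction l with
  | nil => simp [Ef_zero]
  | cons a l ih =>
    rw [List.prod_cons, List.length_cons, Ef_succ, Finset.mem_image]
    exact ⟨(a, l.prod), Finset.mem_product.2 ⟨hl a (by simp), ih fun g hg => hl g (by simp [hg])⟩,
      rfl⟩

lemma card_Ef_le {d : ℕ} (𝒢 : Finset (UG d)) (k : ℕ) :
    (Ef 𝒢 k).card ≤ 𝒢.card ^ k := by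
  induction k with
  | zero => simp [Ef_zero]
  | succ k ih =>
    calc (Ef 𝒢 (k + 1)).card ≤ (𝒢 ×ˢ Ef 𝒢 k).card := by rw [Ef_succ]; exact Finset.card_image_le
      _ = 𝒢.card * (Ef 𝒢 k).card := Finset.card_product _ _
      _ ≤ 𝒢.card * 𝒢.card ^ k := Nat.mul_le_mul_left _ ih
      _ = 𝒢.card ^ (k + 1) := (pow_succ' _ _).symm

lemma geom_sum_le_pow {n : ℕ} (hn : 2 ≤ n) (m : ℕ) :
    ∑ k ∈ Finset.range m, n ^ k ≤ n ^ m := by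
  induction m with
  | zero => simp
  | succ m ih =>
    rw [Finset.sum_range_succ]
    calc (∑ k ∈ Finset.range m, n ^ k) + n ^ m ≤ n ^ m + n ^ m := by omega
      _ = 2 * n ^ m := by ring
      _ ≤ n * n ^ m := Nat.mul_le_mul_right _ hn
      _ = n ^ (m + 1) := (pow_succ' _ _).symm

theorem stmt12 {d : ℕ} (hd : 2 ≤ d) (μ ν : Measure (UG d))
    [IsProbabilityMeasure μ] [μ.IsMulLeftInvariant] [IsProbabilityMeasure ν]
    (c_o cO : ℝ) (hco : 0 < c_o) (hco1 : c_o ≤ 1) (hcO : 1 ≤ cO)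
    (hvol : ∀ r : ℝ, 0 < r → r ≤ 2 →
      ENNReal.ofReal ((c_o * r) ^ (d ^ 2 - 1)) ≤ Vol μ r ∧
        Vol μ r ≤ ENNReal.ofReal ((cO * r) ^ (d ^ 2 - 1)))
    (𝒢 : Finset (UG d)) (h𝒢 : 2 ≤ 𝒢.card)
    {α β ε Δ : ℝ} (hα0 : 0 < α) (hα1 : α ≤ 1) (hβ : 1 ≤ β) (hε : 0 < ε)
    (hβε : β * ε ≤ 1)
    (hequi : Equidistributed μ ν α β ε)
    (hΔ0 : 0 < Δ) (hΔ1 : Δ < 1) (r : ℕ)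
    (hr : (𝒢.card : ℝ) ^ (r + 1) * (cO * β * ε) ^ (d ^ 2 - 1) ≤ Δ) :
    ν {U : UG d | ∃ W ∈ wordsLe 𝒢 r, D U W ≤ ε} ≤ ENNReal.ofReal Δ := by
  set n := 𝒢.card with hn
  set F : Finset (UG d) := (Finset.range (r + 1)).biUnion (Ef 𝒢) with hF
  -- cardinality bound for F
  have hcardF : F.card ≤ n ^ (r + 1) := by
    calc F.card ≤ ∑ k ∈ Finset.range (r + 1), (Ef 𝒢 k).card := Finset.card_biUnion_le
      _ ≤ ∑ k ∈ Finset.range (r + 1), n ^ k :=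
          Finset.sum_le_sum fun k _ => card_Ef_le 𝒢 k
      _ ≤ n ^ (r + 1) := geom_sum_le_pow h𝒢 _
  -- the target set is covered by balls around elements of F
  have hsub : {U : UG d | ∃ W ∈ wordsLe 𝒢 r, D U W ≤ ε} ⊆ ⋃ W ∈ F, ball W ε := by
    rintro U ⟨W, ⟨l, hlen, hmem, hprod⟩, hD⟩
    refine Set.mem_biUnion ?_ hD
    refine Finset.mem_biUnion.2 ⟨l.length, Finset.mem_range.2 (by omega), ?_⟩
    rw [← hprod]; exact prod_mem_Ef 𝒢 l hmem
  -- volume bound for each ball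
  have hβε0 : 0 < β * ε := mul_pos (lt_of_lt_of_le one_pos hβ) hε
  have hx : Vol μ (β * ε) ≤ ENNReal.ofReal ((cO * β * ε) ^ (d ^ 2 - 1)) := by
    have := (hvol (β * ε) hβε0 (by linarith)).2
    rwa [← mul_assoc] at this
  have hball : ∀ W : UG d, ν (ball W ε) ≤ ENNReal.ofReal ((cO * β * ε) ^ (d ^ 2 - 1)) :=
    fun W => le_trans (hequi W ε le_rfl).2 hx
  have hx0 : (0 : ℝ) ≤ (cO * β * ε) ^ (d ^ 2 - 1) := by positivity
  calc ν {U : UG d | ∃ W ∈ wordsLe 𝒢 r, D U W ≤ ε}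
      ≤ ν (⋃ W ∈ F, ball W ε) := measure_mono hsub
    _ ≤ ∑ W ∈ F, ν (ball W ε) := measure_biUnion_finset_le _ _
    _ ≤ ∑ _W ∈ F, ENNReal.ofReal ((cO * β * ε) ^ (d ^ 2 - 1)) :=
        Finset.sum_le_sum fun W _ => hball W
    _ = (F.card : ℝ≥0∞) * ENNReal.ofReal ((cO * β * ε) ^ (d ^ 2 - 1)) := by
        simp [Finset.sum_const, nsmul_eq_mul]
    _ = ENNReal.ofReal ((F.card : ℝ) * (cO * β * ε) ^ (d ^ 2 - 1)) := by
        rw [ENNReal.ofReal_mul (by positivity), ENNReal.ofReal_natCast]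
    _ ≤ ENNReal.ofReal Δ := by
        apply ENNReal.ofReal_le_ofReal
        calc (F.card : ℝ) * (cO * β * ε) ^ (d ^ 2 - 1)
            ≤ (n : ℝ) ^ (r + 1) * (cO * β * ε) ^ (d ^ 2 - 1) := by
              apply mul_le_mul_of_nonneg_right _ hx0
              exact_mod_cast hcardF
          _ ≤ Δ := hr

end Paper
end

section
/- Typical states from equidistributed ensembles have near-maximal complexity: Let 𝒢 be a gate set in U(d), fix a unit vector ψ₀ ∈ S(d), and let ν_S be a probability measure on S(d) such that ν_S(B_S(φ,s)) ≤ (β·s)^{2(d−1)} for every φ ∈ S(d) and every s ≥ ε (upper equidistribution at scale ε with parameter β ≥ 1). Let Δ ∈ (0,1) and let r be a natural number such that |𝒢|^{r+1}·(β·ε)^{2d−2} ≤ Δ. Then ν_S({ψ ∈ S(d) : ∃ W ∈ 𝒢^{≤r} with d_S(ψ, W·ψ₀) ≤ ε}) ≤ Δ; i.e., with ν_S-probability at least 1−Δ the ε-state-complexity of ψ exceeds r. -/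
open MeasureTheory
open scoped ENNReal Matrix InnerProductSpace

/-! A union bound. The words of length at most `r` take at most
`∑_{k ≤ r} |𝒢|^k ≤ |𝒢|^(r+1)` values, the states `W ψ₀` are unit vectors, and the event is
covered by the `ε`-balls around them, each of `νS`-measure at most `(β ε)^(2(d-1))`. -/

namespace Paper

open scoped Pointwise

lemma norm_act {d : ℕ} (W : UG d) (ψ : EV d) : ‖act W ψ‖ = ‖ψ‖ :=
  ContinuousLinearMap.norm_map_of_mem_unitary
    (Unitary.map_mem (Matrix.toEuclideanCLM (n := Fin d) (𝕜 := ℂ)) W.2) ψ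

lemma list_prod_mem_pow {M : Type*} [Monoid M] [DecidableEq M] {s : Finset M} :
    ∀ {l : List M}, (∀ g ∈ l, g ∈ s) → l.prod ∈ s ^ l.length
  | [], _ => by simp
  | g :: l, h => by
    rw [List.prod_cons, List.length_cons, pow_succ']
    exact Finset.mul_mem_mul (h g List.mem_cons_self)
      (list_prod_mem_pow fun x hx => h x (List.mem_cons_of_mem g hx))

lemma wordsLe_subset_biUnion_pow {d : ℕ} (𝒢 : Finset (UG d)) (r : ℕ) :
    wordsLe 𝒢 r ⊆ ↑((Finset.range (r + 1)).biUnion (𝒢 ^ ·)) := by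
  rintro _ ⟨l, hlen, hl, rfl⟩
  simp only [Finset.coe_biUnion, Finset.coe_range, Set.mem_iUnion, Finset.mem_coe]
  exact ⟨l.length, Nat.lt_succ_of_le hlen, list_prod_mem_pow hl⟩

lemma card_biUnion_pow_le {M : Type*} [Monoid M] [DecidableEq M] {s : Finset M}
    (hs : 2 ≤ s.card) (r : ℕ) :
    ((Finset.range (r + 1)).biUnion (s ^ ·)).card ≤ s.card ^ (r + 1) :=
  calc ((Finset.range (r + 1)).biUnion (s ^ ·)).card
      ≤ ∑ k ∈ Finset.range (r + 1), (s ^ k).card := Finset.card_biUnion_le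
    _ ≤ ∑ k ∈ Finset.range (r + 1), s.card ^ k :=
      Finset.sum_le_sum fun _ _ => Finset.card_pow_le
    _ ≤ s.card ^ (r + 1) := (Nat.geomSum_lt hs fun _ hk => Finset.mem_range.mp hk).le

theorem stmt13_general {d : ℕ} (𝒢 : Finset (UG d)) (h𝒢 : 2 ≤ 𝒢.card)
    (ψ₀ : EV d) (hψ₀ : ‖ψ₀‖ = 1)
    (νS : Measure (EV d))
    {β ε Δ : ℝ}
    (hup : ∀ φ : EV d, ‖φ‖ = 1 → ∀ s : ℝ, ε ≤ s →
      νS (ballS φ s) ≤ ENNReal.ofReal ((β * s) ^ (2 * (d - 1))))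
    (r : ℕ)
    (hr : (𝒢.card : ℝ) ^ (r + 1) * (β * ε) ^ (2 * (d - 1)) ≤ Δ) :
    νS {ψ : EV d | ‖ψ‖ = 1 ∧ ∃ W ∈ wordsLe 𝒢 r, dS ψ (act W ψ₀) ≤ ε}
      ≤ ENNReal.ofReal Δ := by
  classical
  set F := (Finset.range (r + 1)).biUnion (𝒢 ^ ·)
  set p := (β * ε) ^ (2 * (d - 1))
  have hcover : {ψ : EV d | ‖ψ‖ = 1 ∧ ∃ W ∈ wordsLe 𝒢 r, dS ψ (act W ψ₀) ≤ ε}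
      ⊆ ⋃ W ∈ F, ballS (act W ψ₀) ε := by
    rintro ψ ⟨hψ, W, hW, hdist⟩
    exact Set.mem_biUnion (wordsLe_subset_biUnion_pow 𝒢 r hW) ⟨hψ, hdist⟩
  calc νS {ψ : EV d | ‖ψ‖ = 1 ∧ ∃ W ∈ wordsLe 𝒢 r, dS ψ (act W ψ₀) ≤ ε}
      ≤ ∑ W ∈ F, νS (ballS (act W ψ₀) ε) :=
        (measure_mono hcover).trans (measure_biUnion_finset_le F _)
    _ ≤ ∑ _W ∈ F, ENNReal.ofReal p :=
        Finset.sum_le_sum fun W _ => hup _ (by rw [norm_act, hψ₀]) ε le_rfl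
    _ = F.card * ENNReal.ofReal p := by rw [Finset.sum_const, nsmul_eq_mul]
    _ ≤ ((𝒢.card ^ (r + 1) : ℕ) : ℝ≥0∞) * ENNReal.ofReal p := by
        gcongr
        exact card_biUnion_pow_le h𝒢 r
    _ = ENNReal.ofReal ((𝒢.card : ℝ) ^ (r + 1) * p) := by
        rw [ENNReal.ofReal_mul (by positivity), ENNReal.ofReal_pow (Nat.cast_nonneg _),
          ENNReal.ofReal_natCast, Nat.cast_pow]
    _ ≤ ENNReal.ofReal Δ := ENNReal.ofReal_le_ofReal hr

theorem stmt13 {d : ℕ} (hd : 2 ≤ d) (𝒢 : Finset (UG d)) (h𝒢 : 2 ≤ 𝒢.card)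
    (ψ₀ : EV d) (hψ₀ : ‖ψ₀‖ = 1)
    (νS : Measure (EV d)) [IsProbabilityMeasure νS]
    {β ε Δ : ℝ} (hβ : 1 ≤ β) (hε : 0 < ε)
    (hup : ∀ φ : EV d, ‖φ‖ = 1 → ∀ s : ℝ, ε ≤ s →
      νS (ballS φ s) ≤ ENNReal.ofReal ((β * s) ^ (2 * (d - 1))))
    (hΔ0 : 0 < Δ) (hΔ1 : Δ < 1) (r : ℕ)
    (hr : (𝒢.card : ℝ) ^ (r + 1) * (β * ε) ^ (2 * (d - 1)) ≤ Δ) :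
    νS {ψ : EV d | ‖ψ‖ = 1 ∧ ∃ W ∈ wordsLe 𝒢 r, dS ψ (act W ψ₀) ≤ ε}
      ≤ ENNReal.ofReal Δ :=
  stmt13_general 𝒢 h𝒢 ψ₀ hψ₀ νS hup r hr

end Paper
end

section
/- Packing points in the support of a measure with small balls: Let X be a separable metric space, let ν be a Borel probability measure on X, let ε > 0, and let f ≥ 0 be a real number such that ν(closed ball of radius 2ε around x) ≤ f for every x ∈ X. Then for every natural number N with N·f < 1, there exists a set S ⊆ supp(ν) of cardinality N whose elements are pairwise at distance > 2ε. -/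
open MeasureTheory
open scoped ENNReal Matrix InnerProductSpace

namespace Paper
open ProbabilityTheory

theorem msupport_eq_support {X : Type*} [TopologicalSpace X] [MeasurableSpace X]
    (ν : Measure X) : msupport ν = ν.support := by
  ext x
  simp only [msupport, Measure.support_eq_forall_isOpen, Set.mem_ofPred_eq, pos_iff_ne_zero]
  exact forall_congr' fun _ => forall_comm

theorem exists_mem_support_notMem_of_measure_lt_univ {X : Type*} [TopologicalSpace X]
    [HereditarilyLindelofSpace X] [MeasurableSpace X] {μ : Measure X} {t : Set X}
    (ht : μ t < μ Set.univ) : ∃ x ∈ μ.support, x ∉ t := by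
  have hpos : 0 < μ tᶜ := by
    refine pos_iff_ne_zero.2 fun h => ht.not_ge ?_
    calc μ Set.univ = μ (t ∪ tᶜ) := by rw [Set.union_compl_self]
      _ ≤ μ t + μ tᶜ := measure_union_le _ _
      _ = μ t := by rw [h, add_zero]
  obtain ⟨x, hxt, hxμ⟩ := Measure.nonempty_inter_support_of_pos hpos
  exact ⟨x, hxμ, hxt⟩

/-- Greedy packing: `N` balls of measure at most `c` cannot cover a set of measure `> N * c`, so
a point of the support outside them can always be added. -/
theorem exists_separated_finset_subset_support {X : Type*} [PseudoMetricSpace X]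
    [HereditarilyLindelofSpace X] [MeasurableSpace X] (μ : Measure X) {r : ℝ} {c : ℝ≥0∞}
    (hr : 0 ≤ r) (hball : ∀ x, μ (Metric.closedBall x r) ≤ c) :
    ∀ N : ℕ, N * c < μ Set.univ → ∃ S : Finset X, ↑S ⊆ μ.support ∧ S.card = N ∧
      (S : Set X).Pairwise fun x y => r < dist x y := by
  classical
  intro N
  induction N with
  | zero => exact fun _ => ⟨∅, by simp, rfl, by simp⟩
  | succ n ih =>
    intro hN
    obtain ⟨S, hSμ, hScard, hSsep⟩ := ih <| lt_of_le_of_lt (by gcongr; simp) hN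
    have hcover : μ (⋃ y ∈ S, Metric.closedBall y r) < μ Set.univ :=
      calc μ (⋃ y ∈ S, Metric.closedBall y r)
          ≤ ∑ y ∈ S, μ (Metric.closedBall y r) := measure_biUnion_finset_le S _
        _ ≤ S.card • c := Finset.sum_le_card_nsmul _ _ _ fun y _ => hball y
        _ ≤ (n + 1 : ℕ) * c := by rw [nsmul_eq_mul, hScard]; gcongr; simp
        _ < μ Set.univ := hN
    obtain ⟨x, hxμ, hxS⟩ := exists_mem_support_notMem_of_measure_lt_univ hcover
    have hfar : ∀ y ∈ S, r < dist x y := by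
      simpa [Metric.mem_closedBall] using hxS
    have hxS' : x ∉ S := fun h => by simpa [hr.not_gt] using hfar x h
    refine ⟨insert x S, ?_, by rw [Finset.card_insert_of_notMem hxS', hScard], ?_⟩
    · simpa [Set.insert_subset_iff] using ⟨hxμ, hSμ⟩
    · rw [Finset.coe_insert]
      exact hSsep.insert fun y hy _ => ⟨hfar y hy, dist_comm x y ▸ hfar y hy⟩

theorem stmt17_general {X : Type*} [MetricSpace X] [TopologicalSpace.SeparableSpace X]
    [MeasurableSpace X]
    (ν : Measure X) [IsProbabilityMeasure ν]
    {ε f : ℝ} (hε : 0 < ε)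
    (hball : ∀ x : X, ν (Metric.closedBall x (2 * ε)) ≤ ENNReal.ofReal f)
    (N : ℕ) (hN : (N : ℝ) * f < 1) :
    ∃ S : Finset X, ↑S ⊆ msupport ν ∧ S.card = N ∧
      (S : Set X).Pairwise (fun x y => 2 * ε < dist x y) := by
  have : SecondCountableTopology X := UniformSpace.secondCountable_of_separable X
  have hNf : (N : ℝ≥0∞) * ENNReal.ofReal f < ν Set.univ := by
    rw [measure_univ, ← ENNReal.ofReal_one, ← ENNReal.ofReal_natCast,
      ← ENNReal.ofReal_mul N.cast_nonneg]
    exact (ENNReal.ofReal_lt_ofReal_iff zero_lt_one).2 hN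
  rw [msupport_eq_support]
  exact exists_separated_finset_subset_support ν (by positivity) hball N hNf

theorem stmt17 {X : Type*} [MetricSpace X] [TopologicalSpace.SeparableSpace X]
    [MeasurableSpace X] [BorelSpace X]
    (ν : Measure X) [IsProbabilityMeasure ν]
    {ε f : ℝ} (hε : 0 < ε) (hf : 0 ≤ f)
    (hball : ∀ x : X, ν (Metric.closedBall x (2 * ε)) ≤ ENNReal.ofReal f)
    (N : ℕ) (hN : (N : ℝ) * f < 1) :
    ∃ S : Finset X, ↑S ⊆ msupport ν ∧ S.card = N ∧
      (S : Set X).Pairwise (fun x y => 2 * ε < dist x y) :=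
  stmt17_general ν hε hball N hN

end Paper
end

section
/- Complexity lower bound from high moments (core of the linear growth bound): Let 𝒢 be a gate set in U(d), let k be a natural number with 6 ≤ k ≤ d², let ε ∈ (0,1), and let ν be a probability measure on U(d) such that for every V ∈ U(d), ∫ |tr(U·Vᴴ)|^{2k} dν(U) ≤ k! + 1 (this holds when ν is a δ-approximate unitary k-expander with δ = d^{−2k}). Then for every natural number r: ν({U ∈ U(d) : ∃ W ∈ 𝒢^{≤r} with D(U,W) ≤ ε}) ≤ |𝒢|^{r+1} / (2(1−ε²))^k. Consequently, for Δ ∈ (0,1), with ν-probability at least 1−Δ the ε-complexity of U is at least (k·log(2(1−ε²)) − log(1/Δ))/log|𝒢|. -/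
/-!
If `D(U, W) ≤ ε`, pick a phase `z` with `‖U - zW‖ ≤ ε` (up to a limit). Summing the squared
column norms, `2d - 2 Re(z̄ tr(UWᴴ)) = ‖U - zW‖_F² ≤ d ε²`, so `|tr(UWᴴ)| ≥ d(1 - ε²/2)`.
Markov's inequality for the `2k`-th moment then bounds the `ν`-mass of every `ε`-ball by
`(k! + 1) / (d(1 - ε²/2))^(2k) ≤ (2(1 - ε²))^(-k)`, using `2^k (k! + 1) ≤ k^k ≤ d^(2k)` and
`(1 - ε²/2)² ≥ 1 - ε²`. A union bound over the at most `|𝒢|^(r+1)` words of length `≤ r`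
gives the first claim, and the second is its logarithmic form.
-/

open MeasureTheory
open scoped ENNReal Matrix InnerProductSpace

open Finset
open scoped Pointwise

namespace Matrix

variable {n 𝕜 : Type*} [Fintype n] [RCLike 𝕜]

lemma trace_conjTranspose_mul_self_eq (A : Matrix n n 𝕜) :
    trace (Aᴴ * A) = ((∑ i, ∑ j, ‖A j i‖ ^ 2 : ℝ) : 𝕜) := by
  simp only [trace, diag, mul_apply, conjTranspose_apply, RCLike.star_def, RCLike.conj_mul]
  push_cast
  rfl

variable [DecidableEq n]

lemma sum_norm_sq_apply_le_norm_toEuclideanCLM_sq (A : Matrix n n 𝕜) (i : n) :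
    ∑ j, ‖A j i‖ ^ 2 ≤ ‖toEuclideanCLM (𝕜 := 𝕜) A‖ ^ 2 := by
  have hcol : toEuclideanCLM (𝕜 := 𝕜) A (WithLp.toLp 2 (Pi.single i 1)) =
      WithLp.toLp 2 (fun j => A j i) := by
    rw [toEuclideanCLM_toLp, mulVec_single_one]
    rfl
  have h := (toEuclideanCLM (𝕜 := 𝕜) A).le_opNorm (WithLp.toLp 2 (Pi.single i 1))
  rw [hcol, PiLp.toLp_single, PiLp.norm_single, norm_one, mul_one] at h
  calc ∑ j, ‖A j i‖ ^ 2 = ‖WithLp.toLp 2 (fun j => A j i)‖ ^ 2 := by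
        rw [EuclideanSpace.norm_sq_eq]
    _ ≤ _ := by gcongr

lemma trace_sub_smul_conjTranspose_mul_self {U W : Matrix n n 𝕜} (hU : U ∈ unitaryGroup n 𝕜)
    (hW : W ∈ unitaryGroup n 𝕜) {z : 𝕜} (hz : ‖z‖ = 1) :
    trace ((U - z • W)ᴴ * (U - z • W)) =
      2 * Fintype.card n - 2 * (RCLike.re (star z * trace (U * Wᴴ)) : 𝕜) := by
  have hUU : Uᴴ * U = 1 := by simpa [star_eq_conjTranspose] using (mem_unitaryGroup_iff'.mp hU)
  have hWW : Wᴴ * W = 1 := by simpa [star_eq_conjTranspose] using (mem_unitaryGroup_iff'.mp hW)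
  have hzz : star z * z = 1 := by
    rw [RCLike.star_def, RCLike.conj_mul, hz]; simp
  have hT : trace (Uᴴ * W) = star (trace (U * Wᴴ)) := by
    rw [← trace_conjTranspose, conjTranspose_mul, conjTranspose_conjTranspose, trace_mul_comm]
  have hre : star z * trace (U * Wᴴ) + star (star z * trace (U * Wᴴ)) =
      2 * (RCLike.re (star z * trace (U * Wᴴ)) : 𝕜) := by
    rw [RCLike.star_def, RCLike.add_conj]
  rw [← hre, conjTranspose_sub, conjTranspose_smul]
  simp only [sub_mul, mul_sub, Matrix.smul_mul, Matrix.mul_smul, smul_smul, hUU, hWW, trace_sub,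
    trace_smul, trace_one, hT, trace_mul_comm Wᴴ U, smul_eq_mul, star_mul, star_star]
  linear_combination (Fintype.card n : 𝕜) * hzz

lemma two_mul_sub_norm_trace_le {U W : Matrix n n 𝕜} (hU : U ∈ unitaryGroup n 𝕜)
    (hW : W ∈ unitaryGroup n 𝕜) {z : 𝕜} (hz : ‖z‖ = 1) :
    2 * (Fintype.card n - ‖trace (U * Wᴴ)‖) ≤
      Fintype.card n * ‖toEuclideanCLM (𝕜 := 𝕜) (U - z • W)‖ ^ 2 := by
  have hsum : ∑ i, ∑ j, ‖(U - z • W) j i‖ ^ 2 =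
      2 * Fintype.card n - 2 * RCLike.re (star z * trace (U * Wᴴ)) := by
    apply RCLike.ofReal_injective (K := 𝕜)
    rw [← trace_conjTranspose_mul_self_eq, trace_sub_smul_conjTranspose_mul_self hU hW hz]
    push_cast
    rfl
  have hre : RCLike.re (star z * trace (U * Wᴴ)) ≤ ‖trace (U * Wᴴ)‖ := by
    simpa [hz] using RCLike.re_le_norm (star z * trace (U * Wᴴ))
  calc 2 * (Fintype.card n - ‖trace (U * Wᴴ)‖)
      ≤ 2 * Fintype.card n - 2 * RCLike.re (star z * trace (U * Wᴴ)) := by linarith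
    _ = ∑ i, ∑ j, ‖(U - z • W) j i‖ ^ 2 := hsum.symm
    _ ≤ ∑ _i : n, ‖toEuclideanCLM (𝕜 := 𝕜) (U - z • W)‖ ^ 2 :=
        Finset.sum_le_sum fun i _ => sum_norm_sq_apply_le_norm_toEuclideanCLM_sq _ i
    _ = _ := by simp

end Matrix

namespace Finset

variable {M : Type*} [Monoid M] [DecidableEq M]

lemma list_prod_mem_pow {s : Finset M} : ∀ {l : List M}, (∀ g ∈ l, g ∈ s) → l.prod ∈ s ^ l.length
  | [], _ => by simp
  | g :: l, h => by
    rw [List.prod_cons, List.length_cons, pow_succ']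
    exact mul_mem_mul (h g List.mem_cons_self)
      (list_prod_mem_pow fun x hx => h x (List.mem_cons_of_mem g hx))

lemma card_biUnion_range_pow_le {s : Finset M} (hs : 2 ≤ #s) (r : ℕ) :
    #((range (r + 1)).biUnion (s ^ ·)) ≤ #s ^ (r + 1) :=
  calc #((range (r + 1)).biUnion (s ^ ·))
      ≤ ∑ n ∈ range (r + 1), #(s ^ n) := card_biUnion_le
    _ ≤ ∑ n ∈ range (r + 1), #s ^ n := sum_le_sum fun _ _ => card_pow_le
    _ ≤ #s ^ (r + 1) := (Nat.geomSum_lt hs fun _ => mem_range.mp).le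

end Finset

lemma two_pow_mul_factorial_add_one_le_pow_self {k : ℕ} (hk : 6 ≤ k) :
    2 ^ k * (k.factorial + 1) ≤ k ^ k := by
  induction k, hk using Nat.le_induction with
  | base => decide
  | succ k hk ih =>
    have hbern : 2 * k ^ k ≤ (k + 1) ^ k := by
      have h := pow_add_mul_le_add_pow (a := k) (b := 1) (Nat.zero_le k) (by omega) k
      rwa [mul_one, Nat.cast_id, ← pow_succ', Nat.sub_add_cancel (by omega), ← two_mul] at h
    calc 2 ^ (k + 1) * ((k + 1).factorial + 1)
        ≤ 2 ^ (k + 1) * ((k + 1) * (k.factorial + 1)) := by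
          rw [Nat.factorial_succ]; gcongr; nlinarith
      _ = (k + 1) * (2 * (2 ^ k * (k.factorial + 1))) := by ring
      _ ≤ (k + 1) * (2 * k ^ k) := by gcongr
      _ ≤ (k + 1) * (k + 1) ^ k := by gcongr
      _ = (k + 1) ^ (k + 1) := by ring

lemma factorial_add_one_div_pow_le {d k : ℕ} (hk : 6 ≤ k) (hkd : k ≤ d ^ 2) {ε : ℝ}
    (hε : ε ^ 2 < 1) :
    ((k.factorial : ℝ) + 1) / ((d : ℝ) * (1 - ε ^ 2 / 2)) ^ (2 * k) ≤
      1 / (2 * (1 - ε ^ 2)) ^ k := by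
  have hfac : (2 : ℝ) ^ k * ((k.factorial : ℝ) + 1) ≤ ((d : ℝ) ^ 2) ^ k := by
    calc (2 : ℝ) ^ k * ((k.factorial : ℝ) + 1) ≤ (k : ℝ) ^ k := by
          exact_mod_cast two_pow_mul_factorial_add_one_le_pow_self hk
      _ ≤ ((d : ℝ) ^ 2) ^ k := by gcongr; exact_mod_cast hkd
  have hsq : 1 - ε ^ 2 ≤ (1 - ε ^ 2 / 2) ^ 2 := by nlinarith
  have hd : 0 < d := Nat.pos_of_ne_zero fun h => by simp [h] at hkd; omega
  have ht : 0 < (d : ℝ) * (1 - ε ^ 2 / 2) := mul_pos (by exact_mod_cast hd) (by linarith)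
  rw [div_le_div_iff₀ (pow_pos ht _) (pow_pos (by linarith) _)]
  calc ((k.factorial : ℝ) + 1) * (2 * (1 - ε ^ 2)) ^ k
      = (2 ^ k * ((k.factorial : ℝ) + 1)) * (1 - ε ^ 2) ^ k := by rw [mul_pow]; ring
    _ ≤ ((d : ℝ) ^ 2) ^ k * ((1 - ε ^ 2 / 2) ^ 2) ^ k := by gcongr
    _ = 1 * ((d : ℝ) * (1 - ε ^ 2 / 2)) ^ (2 * k) := by
        rw [one_mul, mul_pow, pow_mul, pow_mul]

lemma pow_div_pow_le_of_mul_log_le {m a Δ : ℝ} (hm : 0 < m) (ha : 0 < a) (hΔ : 0 < Δ) {r k : ℕ}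
    (h : ((r : ℝ) + 1) * Real.log m ≤ k * Real.log a - Real.log (1 / Δ)) :
    m ^ (r + 1) / a ^ k ≤ Δ := by
  rw [div_le_iff₀ (pow_pos ha k), ← Real.log_le_log_iff (by positivity) (by positivity),
    Real.log_mul hΔ.ne' (by positivity), Real.log_pow, Real.log_pow]
  rw [one_div, Real.log_inv] at h
  push_cast
  linarith

namespace Paper

lemma mul_one_sub_sq_div_two_le_norm_trace {d : ℕ} {U W : UG d} {ε : ℝ} (hD : D U W ≤ ε) :
    (d : ℝ) * (1 - ε ^ 2 / 2) ≤
      ‖Matrix.trace ((U : Matrix (Fin d) (Fin d) ℂ) * (W : Matrix (Fin d) (Fin d) ℂ)ᴴ)‖ := by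
  set T := Matrix.trace ((U : Matrix (Fin d) (Fin d) ℂ) * (W : Matrix (Fin d) (Fin d) ℂ)ᴴ)
  suffices 2 * (d - ‖T‖) ≤ d * ε ^ 2 by linarith
  -- The infimum defining `D` need not be attained, so approach `ε` from above.
  have hclosed : IsClosed {η : ℝ | 2 * (d - ‖T‖) ≤ d * η ^ 2} :=
    isClosed_le continuous_const (by fun_prop)
  have hIoi : Set.Ioi ε ⊆ {η : ℝ | 2 * (d - ‖T‖) ≤ d * η ^ 2} := by
    intro η hη
    have : Nonempty {z : ℂ // ‖z‖ = 1} := ⟨⟨1, norm_one⟩⟩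
    obtain ⟨z, hz⟩ := exists_lt_of_ciInf_lt (lt_of_le_of_lt hD hη)
    have hbound := Matrix.two_mul_sub_norm_trace_le U.2 W.2 z.2
    rw [Fintype.card_fin] at hbound
    exact hbound.trans (mul_le_mul_of_nonneg_left
      (pow_le_pow_left₀ (norm_nonneg _) hz.le 2) (Nat.cast_nonneg d))
  exact hclosed.closure_subset_iff.mpr hIoi (by rw [closure_Ioi]; exact Set.mem_Ici.mpr le_rfl)

lemma measure_ball_le_of_lintegral_le {d k : ℕ} (hd : 0 < d) {ε M : ℝ} (hε : ε ^ 2 < 2)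
    {ν : Measure (UG d)} {W : UG d}
    (hmom : ∫⁻ U, ENNReal.ofReal
          (‖Matrix.trace ((U : Matrix (Fin d) (Fin d) ℂ) *
              (W : Matrix (Fin d) (Fin d) ℂ)ᴴ)‖ ^ (2 * k)) ∂ν ≤ ENNReal.ofReal M) :
    ν (ball W ε) ≤ ENNReal.ofReal (M / ((d : ℝ) * (1 - ε ^ 2 / 2)) ^ (2 * k)) := by
  set t : ℝ := (d : ℝ) * (1 - ε ^ 2 / 2)
  have ht : 0 < t := mul_pos (by exact_mod_cast hd) (by linarith)
  set f : UG d → ℝ≥0∞ := fun U => ENNReal.ofReal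
    (‖Matrix.trace ((U : Matrix (Fin d) (Fin d) ℂ) * (W : Matrix (Fin d) (Fin d) ℂ)ᴴ)‖ ^ (2 * k))
  have hf : Measurable f := (Continuous.measurable (by fun_prop)).ennreal_ofReal
  calc ν (ball W ε)
      ≤ ν {U | ENNReal.ofReal (t ^ (2 * k)) ≤ f U} :=
        measure_mono fun U hU => ENNReal.ofReal_le_ofReal
          (pow_le_pow_left₀ ht.le (mul_one_sub_sq_div_two_le_norm_trace hU) _)
    _ ≤ (∫⁻ U, f U ∂ν) / ENNReal.ofReal (t ^ (2 * k)) :=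
        meas_ge_le_lintegral_div hf.aemeasurable (by positivity) ENNReal.ofReal_ne_top
    _ ≤ ENNReal.ofReal M / ENNReal.ofReal (t ^ (2 * k)) := by gcongr
    _ = ENNReal.ofReal (M / t ^ (2 * k)) := (ENNReal.ofReal_div_of_pos (by positivity)).symm

lemma measure_exists_wordsLe_le {d : ℕ} {𝒢 : Finset (UG d)} (h𝒢 : 2 ≤ #𝒢) (r : ℕ) {ε c : ℝ}
    (hc : 0 ≤ c) {ν : Measure (UG d)} (hball : ∀ W, ν (ball W ε) ≤ ENNReal.ofReal c) :
    ν {U | ∃ W ∈ wordsLe 𝒢 r, D U W ≤ ε} ≤ ENNReal.ofReal ((#𝒢 : ℝ) ^ (r + 1) * c) := by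
  classical
  set F := (range (r + 1)).biUnion (𝒢 ^ ·)
  have hsub : {U | ∃ W ∈ wordsLe 𝒢 r, D U W ≤ ε} ⊆ ⋃ W ∈ F, ball W ε := by
    rintro U ⟨_, ⟨l, hl, hmem, rfl⟩, hU⟩
    exact Set.mem_biUnion
      (mem_biUnion.mpr ⟨l.length, mem_range.mpr (by omega), list_prod_mem_pow hmem⟩) hU
  calc ν {U | ∃ W ∈ wordsLe 𝒢 r, D U W ≤ ε}
      ≤ ∑ W ∈ F, ν (ball W ε) := (measure_mono hsub).trans (measure_biUnion_finset_le _ _)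
    _ ≤ ∑ _W ∈ F, ENNReal.ofReal c := sum_le_sum fun W _ => hball W
    _ = ENNReal.ofReal (#F * c) := by
      rw [sum_const, nsmul_eq_mul, ENNReal.ofReal_mul (by positivity), ENNReal.ofReal_natCast]
    _ ≤ ENNReal.ofReal ((#𝒢 : ℝ) ^ (r + 1) * c) := by
      gcongr
      exact_mod_cast card_biUnion_range_pow_le h𝒢 r

open ProbabilityTheory

theorem stmt19_general {d : ℕ} (𝒢 : Finset (UG d)) (h𝒢 : 2 ≤ 𝒢.card)
    (k : ℕ) (hk6 : 6 ≤ k) (hkd : k ≤ d ^ 2)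
    {ε : ℝ} (hε0 : 0 < ε) (hε1 : ε < 1)
    (ν : Measure (UG d))
    (hmom : ∀ V : UG d,
      ∫⁻ U, ENNReal.ofReal
          (‖Matrix.trace ((U : Matrix (Fin d) (Fin d) ℂ) *
              (V : Matrix (Fin d) (Fin d) ℂ)ᴴ)‖ ^ (2 * k)) ∂ν
        ≤ ENNReal.ofReal ((k.factorial : ℝ) + 1)) :
    (∀ r : ℕ, ν {U : UG d | ∃ W ∈ wordsLe 𝒢 r, D U W ≤ ε}
        ≤ ENNReal.ofReal ((𝒢.card : ℝ) ^ (r + 1) / (2 * (1 - ε ^ 2)) ^ k)) ∧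
      (∀ (Δ : ℝ) (r : ℕ), 0 < Δ → Δ < 1 →
        ((r : ℝ) + 1) * Real.log (𝒢.card) ≤
            (k : ℝ) * Real.log (2 * (1 - ε ^ 2)) - Real.log (1 / Δ) →
        ν {U : UG d | ∃ W ∈ wordsLe 𝒢 r, D U W ≤ ε} ≤ ENNReal.ofReal Δ) := by
  have hd : 0 < d := Nat.pos_of_ne_zero fun h => by simp [h] at hkd; omega
  have hε : ε ^ 2 < 1 := by nlinarith
  have hball (W : UG d) : ν (ball W ε) ≤ ENNReal.ofReal (1 / (2 * (1 - ε ^ 2)) ^ k) :=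
    (measure_ball_le_of_lintegral_le hd (by linarith) (hmom W)).trans
      (ENNReal.ofReal_le_ofReal (factorial_add_one_div_pow_le hk6 hkd hε))
  have hwords (r : ℕ) : ν {U : UG d | ∃ W ∈ wordsLe 𝒢 r, D U W ≤ ε}
      ≤ ENNReal.ofReal ((𝒢.card : ℝ) ^ (r + 1) / (2 * (1 - ε ^ 2)) ^ k) := by
    rw [← mul_one_div]
    exact measure_exists_wordsLe_le h𝒢 r (by positivity) hball
  refine ⟨hwords, fun Δ r hΔ _ hlog => (hwords r).trans (ENNReal.ofReal_le_ofReal ?_)⟩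
  exact pow_div_pow_le_of_mul_log_le (by positivity) (by linarith) hΔ hlog

theorem stmt19 {d : ℕ} (hd : 2 ≤ d) (𝒢 : Finset (UG d)) (h𝒢 : 2 ≤ 𝒢.card)
    (k : ℕ) (hk6 : 6 ≤ k) (hkd : k ≤ d ^ 2)
    {ε : ℝ} (hε0 : 0 < ε) (hε1 : ε < 1)
    (ν : Measure (UG d)) [IsProbabilityMeasure ν]
    (hmom : ∀ V : UG d,
      ∫⁻ U, ENNReal.ofReal
          (‖Matrix.trace ((U : Matrix (Fin d) (Fin d) ℂ) *
              (V : Matrix (Fin d) (Fin d) ℂ)ᴴ)‖ ^ (2 * k)) ∂ν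
        ≤ ENNReal.ofReal ((k.factorial : ℝ) + 1)) :
    (∀ r : ℕ, ν {U : UG d | ∃ W ∈ wordsLe 𝒢 r, D U W ≤ ε}
        ≤ ENNReal.ofReal ((𝒢.card : ℝ) ^ (r + 1) / (2 * (1 - ε ^ 2)) ^ k)) ∧
      (∀ (Δ : ℝ) (r : ℕ), 0 < Δ → Δ < 1 →
        ((r : ℝ) + 1) * Real.log (𝒢.card) ≤
            (k : ℝ) * Real.log (2 * (1 - ε ^ 2)) - Real.log (1 / Δ) →
        ν {U : UG d | ∃ W ∈ wordsLe 𝒢 r, D U W ≤ ε} ≤ ENNReal.ofReal Δ) :=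
  stmt19_general 𝒢 h𝒢 k hk6 hkd hε0 hε1 ν hmom

end Paper
end
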